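/- arXiv:math/0212221 — 5 statements merged into one kernel-verified Lean document; each statement's English description precedes it below -/
import Mathlib

section
/- A permutation π of {1,...,n} is 321-avoiding if and only if both the subsequence of values at excedance positions (positions i with π(i) > i, taken in increasing order of position) and the subsequence of values at non-excedance positions are increasing. -/
/-- A Dyck word: a list of booleans (`true` = up-step, `false` = down-step)
with equally many ups and downs, every prefix having at least as many ups as downs. -/
def IsDyck (w : List Bool) : Prop :=
  w.count true = w.count false ∧
    ∀ k < w.length, (w.take k).count false ≤ (w.take k).count true

instance : DecidablePred IsDyck := fun w => by unfold IsDyck; infer_instance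

/-- Number of double rises (factors `uu`). -/
def numDR (w : List Bool) : ℕ :=
  ((List.range w.length).filter
    (fun i => w.getD i false = true ∧ w.getD (i+1) false = true)).length

/-- Number of peaks (factors `ud`). -/
def numPeaks (w : List Bool) : ℕ :=
  ((List.range w.length).filter
    (fun i => i+1 < w.length ∧ w.getD i false = true ∧ w.getD (i+1) true = false)).length

/-- Number of valleys (factors `du`). -/
def numValleys (w : List Bool) : ℕ :=
  ((List.range w.length).filter
    (fun i => i+1 < w.length ∧ w.getD i true = false ∧ w.getD (i+1) false = true)).length

/-- Number of hills: peaks whose up-step starts at height 0. -/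
def numHills (w : List Bool) : ℕ :=
  ((List.range w.length).filter
    (fun i => i+1 < w.length ∧ w.getD i false = true ∧ w.getD (i+1) true = false ∧
      (w.take i).count true = (w.take i).count false)).length

/-- Number of peaks of height at least 2: peaks whose up-step starts at positive height. -/
def numPeaks2 (w : List Bool) : ℕ :=
  ((List.range w.length).filter
    (fun i => i+1 < w.length ∧ w.getD i false = true ∧ w.getD (i+1) true = false ∧
      (w.take i).count false < (w.take i).count true)).length

/-- Tunnels of a Dyck word, as pairs `(i, j)`: position `i` holds an up-step, position `j`
a down-step, and the factor strictly between them is a Dyck word (so `w = A u B d C` with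
`|A| = i`, `|C| = w.length - j - 1`). -/
def tunnels (w : List Bool) : Finset (ℕ × ℕ) :=
  ((Finset.range w.length) ×ˢ (Finset.range w.length)).filter
    (fun p => p.1 < p.2 ∧ w.getD p.1 false = true ∧ w.getD p.2 true = false ∧
      IsDyck ((w.drop (p.1+1)).take (p.2 - p.1 - 1)))

/-- Number of tunnels whose midpoint lies on the vertical line `x = n - r`
(for a path of length `2n`); the midpoint of tunnel `(i,j)` has x-coordinate `(i+j+1)/2`. -/
def ctr (r : ℤ) (w : List Bool) : ℕ :=
  ((tunnels w).filter (fun p => (p.1 : ℤ) + p.2 + 1 = (w.length : ℤ) - 2*r)).card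

/-- Number of tunnels whose midpoint lies strictly to the left of the line `x = n - r`. -/
def ltr (r : ℤ) (w : List Bool) : ℕ :=
  ((tunnels w).filter (fun p => (p.1 : ℤ) + p.2 + 1 < (w.length : ℤ) - 2*r)).card

/-- Number of centered tunnels. -/
def ctCount (w : List Bool) : ℕ := ctr 0 w

/-- Number of left tunnels. -/
def ltCount (w : List Bool) : ℕ := ltr 0 w

/-- `π` avoids the pattern 321. -/
def Avoids321 {n : ℕ} (π : Equiv.Perm (Fin n)) : Prop :=
  ¬ ∃ i j k : Fin n, i < j ∧ j < k ∧ π k < π j ∧ π j < π i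

/-- `π` avoids the pattern 132. -/
def Avoids132 {n : ℕ} (π : Equiv.Perm (Fin n)) : Prop :=
  ¬ ∃ i j k : Fin n, i < j ∧ j < k ∧ π i < π k ∧ π k < π j

/-- Number of fixed points. -/
noncomputable def fpCount {n : ℕ} (π : Equiv.Perm (Fin n)) : ℕ := Nat.card {i : Fin n // π i = i}

/-- Number of excedances. -/
noncomputable def excCount {n : ℕ} (π : Equiv.Perm (Fin n)) : ℕ := Nat.card {i : Fin n // i < π i}

/-- Number of weak excedances. -/
noncomputable def wexcCount {n : ℕ} (π : Equiv.Perm (Fin n)) : ℕ := Nat.card {i : Fin n // i ≤ π i}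
lemma key1 {n : ℕ} (π : Equiv.Perm (Fin n)) {i j : Fin n} (hij : i < j) (hj : j < π j)
    (hπ : π j < π i) (h : ∀ k, j < k → π j ≤ π k) : False := by
  have hsub : ∀ v ∈ Finset.Iio (π j), π⁻¹ v ∈ (Finset.Iio j).erase i := by
    intro v hv
    rw [Finset.mem_Iio] at hv
    rw [Finset.mem_erase, Finset.mem_Iio]
    constructor
    · intro he
      have : v = π i := by
        have := congrArg π he
        simpa using this
      exact absurd hπ (by rw [← this]; exact not_lt.2 hv.le)
    · by_contra hle
      rcases lt_or_eq_of_le (not_lt.1 hle) with hlt | heq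
      · have := h _ hlt
        simp at this
        exact absurd hv (not_lt.2 this)
      · have : v = π j := by
          have := congrArg π heq.symm
          simpa using this
        exact absurd hv (by rw [this]; exact lt_irrefl _)
  have hcard := Finset.card_le_card_of_injOn (fun v => π⁻¹ v)
    hsub (fun a _ b _ hab => (π⁻¹ : Equiv.Perm (Fin n)).injective hab)
  have hmem : i ∈ Finset.Iio j := Finset.mem_Iio.2 hij
  rw [Finset.card_erase_of_mem hmem, Fin.card_Iio, Fin.card_Iio] at hcard
  have h1 : (j : ℕ) < (π j : ℕ) := hj
  have h2 : (i : ℕ) < (j : ℕ) := hij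
  omega

lemma key2 {n : ℕ} (π : Equiv.Perm (Fin n)) {i j : Fin n} (hij : i < j) (hi : π i ≤ i)
    (hπ : π j < π i) (h : ∀ k, k < i → π k ≤ π i) : False := by
  have hsub : ∀ v ∈ Finset.Ioi (π i), π⁻¹ v ∈ (Finset.Ioi i).erase j := by
    intro v hv
    rw [Finset.mem_Ioi] at hv
    rw [Finset.mem_erase, Finset.mem_Ioi]
    constructor
    · intro he
      have : v = π j := by
        have := congrArg π he
        simpa using this
      exact absurd hv (by rw [this]; exact not_lt.2 hπ.le)
    · by_contra hle
      rcases lt_or_eq_of_le (not_lt.1 hle) with hlt | heq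
      · have := h _ hlt
        simp at this
        exact absurd hv (not_lt.2 this)
      · have : v = π i := by
          have := congrArg π heq
          simpa using this
        exact absurd hv (by rw [this]; exact lt_irrefl _)
  have hcard := Finset.card_le_card_of_injOn (fun v => π⁻¹ v)
    hsub (fun a _ b _ hab => (π⁻¹ : Equiv.Perm (Fin n)).injective hab)
  have hmem : j ∈ Finset.Ioi i := Finset.mem_Ioi.2 hij
  rw [Finset.card_erase_of_mem hmem, Fin.card_Ioi, Fin.card_Ioi] at hcard
  have h1 : (π i : ℕ) ≤ (i : ℕ) := hi
  have h2 : (i : ℕ) < (j : ℕ) := hij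
  have h3 : (j : ℕ) < n := j.isLt
  omega

/-- A permutation is 321-avoiding iff both the subsequence of values at excedance
positions and the subsequence of values at non-excedance positions are increasing. -/
theorem stmt2 (n : ℕ) (π : Equiv.Perm (Fin n)) :
    Avoids321 π ↔
      StrictMonoOn (⇑π) {i : Fin n | i < π i} ∧
      StrictMonoOn (⇑π) {i : Fin n | ¬ i < π i} := by
  constructor
  · intro h
    constructor
    · intro i hi j hj hij
      by_contra hc
      have hji : π j < π i :=
        lt_of_le_of_ne (not_lt.1 hc) (fun he => hij.ne' (π.injective he))
      have h' : ∀ k, j < k → π j ≤ π k := fun k hk =>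
        not_lt.1 fun hlt => h ⟨i, j, k, hij, hk, hlt, hji⟩
      exact key1 π hij hj hji h'
    · intro i hi j hj hij
      by_contra hc
      have hji : π j < π i :=
        lt_of_le_of_ne (not_lt.1 hc) (fun he => hij.ne' (π.injective he))
      have h' : ∀ k, k < i → π k ≤ π i := fun k hk =>
        not_lt.1 fun hlt => h ⟨k, i, j, hk, hij, hji, hlt⟩
      exact key2 π hij (not_lt.1 hi) hji h'
  · rintro ⟨h1, h2⟩ ⟨i, j, k, hij, hjk, hkj, hji⟩
    by_cases hi : i < π i <;> by_cases hj : j < π j <;> by_cases hk : k < π k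
    · exact absurd (h1 hi hj hij) (not_lt.2 hji.le)
    · exact absurd (h1 hi hj hij) (not_lt.2 hji.le)
    · exact absurd (h1 hi hk (hij.trans hjk)) (not_lt.2 ((hkj.trans hji).le))
    · exact absurd (h2 hj hk hjk) (not_lt.2 hkj.le)
    · exact absurd (h1 hj hk hjk) (not_lt.2 hkj.le)
    · exact absurd (h2 hi hk (hij.trans hjk)) (not_lt.2 ((hkj.trans hji).le))
    · exact absurd (h2 hi hj hij) (not_lt.2 hji.le)
    · exact absurd (h2 hi hj hij) (not_lt.2 hji.le)
end

section
/- The pair of statistics (number of valleys, number of double rises) on Dyck paths of semilength n is jointly symmetric: the number of Dyck paths of semilength n with a valleys and b double rises equals the number with b valleys and a double rises. -/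
/-!
Cutting a Dyck path at the first return to the axis, `w = u A d B`, and recursing on `A` and `B`
identifies Dyck paths of semilength `n` with binary trees on `n` nodes (`DyckWord.equivTree`).
A double rise is the `u` of a node followed by the first `u` of a nonempty left subtree `A`, and a
valley is the `d` of a node followed by the first `u` of a nonempty right subtree `B`. So double
rises count left children, valleys count right children, and mirroring the tree exchanges them.
-/

open BinaryTree DyckStep

lemma isDyck_iff_forall_take (w : List Bool) : IsDyck w ↔
    w.count true = w.count false ∧ ∀ k, (w.take k).count false ≤ (w.take k).count true := by
  refine ⟨fun h => ⟨h.1, fun k => ?_⟩, fun h => ⟨h.1, fun k _ => h.2 k⟩⟩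
  rcases lt_or_ge k w.length with hk | hk
  · exact h.2 k hk
  · rw [List.take_of_length_le hk]
    exact h.1.ge

@[simp] lemma numDR_nil : numDR [] = 0 := rfl

@[simp] lemma numValleys_nil : numValleys [] = 0 := rfl

lemma numDR_cons (x : Bool) (w : List Bool) :
    numDR (x :: w) = numDR w + if x = true ∧ w.head? = some true then 1 else 0 := by
  unfold numDR
  rw [List.length_cons, List.range_succ_eq_map, List.filter_cons, List.filter_map]
  cases w <;> cases x <;> split <;> simp_all [Function.comp_def]

lemma numValleys_cons (x : Bool) (w : List Bool) :
    numValleys (x :: w) = numValleys w + if x = false ∧ w.head? = some true then 1 else 0 := by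
  unfold numValleys
  rw [List.length_cons, List.range_succ_eq_map, List.filter_cons, List.filter_map]
  cases w <;> cases x <;> split <;> simp_all [Function.comp_def]

lemma numDR_append_false_cons (u v : List Bool) :
    numDR (u ++ false :: v) = numDR u + numDR v := by
  induction u with
  | nil => simp [numDR_cons]
  | cons x u ih =>
    rw [List.cons_append, numDR_cons, ih, numDR_cons]
    cases u <;> simp [Nat.add_right_comm]

lemma numValleys_append_false_cons (u v : List Bool) :
    numValleys (u ++ false :: v) =
      numValleys u + numValleys v + if v.head? = some true then 1 else 0 := by
  induction u with
  | nil => simp [numValleys_cons]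
  | cons x u ih =>
    rw [List.cons_append, numValleys_cons, ih, numValleys_cons]
    cases u <;> simp [Nat.add_right_comm]

namespace BinaryTree

variable {α : Type*}

def mirror : BinaryTree α → BinaryTree α
  | nil => nil
  | node a l r => node a r.mirror l.mirror

def numLeftChildren : BinaryTree α → ℕ
  | nil => 0
  | node _ nil r => r.numLeftChildren
  | node _ l@(node ..) r => l.numLeftChildren + r.numLeftChildren + 1

def numRightChildren : BinaryTree α → ℕ
  | nil => 0
  | node _ l nil => l.numRightChildren
  | node _ l r@(node ..) => l.numRightChildren + r.numRightChildren + 1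

def toBools : BinaryTree α → List Bool
  | nil => []
  | node _ l r => true :: (l.toBools ++ false :: r.toBools)

@[simp] lemma mirror_mirror (t : BinaryTree α) : t.mirror.mirror = t := by
  induction t <;> simp_all [mirror]

lemma mirror_involutive : Function.Involutive (mirror (α := α)) := mirror_mirror

@[simp] lemma numNodes_mirror (t : BinaryTree α) : t.mirror.numNodes = t.numNodes := by
  induction t <;> simp_all [mirror]; omega

@[simp] lemma numLeftChildren_mirror (t : BinaryTree α) :
    t.mirror.numLeftChildren = t.numRightChildren := by
  induction t with
  | nil => simp [mirror, numLeftChildren, numRightChildren]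
  | node a l r ihl ihr =>
    cases l <;> cases r <;> simp_all [mirror, numLeftChildren, numRightChildren, Nat.add_comm]

@[simp] lemma numRightChildren_mirror (t : BinaryTree α) :
    t.mirror.numRightChildren = t.numLeftChildren := by
  rw [← numLeftChildren_mirror, mirror_mirror]

@[simp] lemma length_toBools (t : BinaryTree α) : t.toBools.length = 2 * t.numNodes := by
  induction t <;> simp_all [toBools]; omega

@[simp] lemma numDR_toBools (t : BinaryTree α) : numDR t.toBools = t.numLeftChildren := by
  induction t with
  | nil => simp [toBools, numLeftChildren]
  | node a l r ihl ihr =>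
    rw [toBools, numDR_cons, numDR_append_false_cons, ihl, ihr]
    cases l <;> simp [toBools, numLeftChildren]

@[simp] lemma numValleys_toBools (t : BinaryTree α) :
    numValleys t.toBools = t.numRightChildren := by
  induction t with
  | nil => simp [toBools, numRightChildren]
  | node a l r ihl ihr =>
    rw [toBools, numValleys_cons, numValleys_append_false_cons, ihl, ihr]
    cases r <;> simp [toBools, numRightChildren]

end BinaryTree

def DyckStep.equivBool : DyckStep ≃ Bool where
  toFun
    | U => true
    | D => false
  invFun b := if b then U else D
  left_inv s := by cases s <;> rfl
  right_inv b := by cases b <;> rfl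

@[simp] lemma DyckStep.equivBool_U : equivBool U = true := rfl

@[simp] lemma DyckStep.equivBool_D : equivBool D = false := rfl

lemma isDyck_map_equivBool_iff (l : List DyckStep) : IsDyck (l.map DyckStep.equivBool) ↔
    l.count U = l.count D ∧ ∀ k, (l.take k).count D ≤ (l.take k).count U := by
  rw [isDyck_iff_forall_take, show true = DyckStep.equivBool U from rfl,
    show false = DyckStep.equivBool D from rfl]
  simp only [← List.map_take, List.count_map_of_injective _ _ DyckStep.equivBool.injective]

namespace DyckWord

def equivIsDyck : DyckWord ≃ {w : List Bool // IsDyck w} where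
  toFun p := ⟨p.toList.map DyckStep.equivBool,
    (isDyck_map_equivBool_iff _).2 ⟨p.count_U_eq_count_D, p.count_D_le_count_U⟩⟩
  invFun w :=
    have h := (isDyck_map_equivBool_iff (w.1.map DyckStep.equivBool.symm)).1 (by simpa using w.2)
    ⟨w.1.map DyckStep.equivBool.symm, h.1, h.2⟩
  left_inv p := by ext1; simp
  right_inv w := by ext1; simp

end DyckWord

lemma BinaryTree.toBools_eq_map_ofTree (t : BinaryTree Unit) :
    t.toBools = (DyckWord.ofTree t).toList.map DyckStep.equivBool := by
  induction t with
  | nil => rfl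
  | node a l r ihl ihr =>
    change _ = List.map _ (U :: ((DyckWord.ofTree l).toList ++ [D]) ++ (DyckWord.ofTree r).toList)
    simp [toBools, ihl, ihr]

def BinaryTree.equivIsDyck : BinaryTree Unit ≃ {w : List Bool // IsDyck w} :=
  DyckWord.equivTree.symm.trans DyckWord.equivIsDyck

lemma BinaryTree.coe_equivIsDyck (t : BinaryTree Unit) : (equivIsDyck t : List Bool) = t.toBools :=
  (toBools_eq_map_ofTree t).symm

@[simp] lemma BinaryTree.isDyck_toBools (t : BinaryTree Unit) : IsDyck t.toBools :=
  coe_equivIsDyck t ▸ (equivIsDyck t).2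

lemma card_subtype_eq_card_binaryTree {P : List Bool → Prop} (hP : ∀ {w}, P w → IsDyck w) :
    Nat.card {w // P w} = Nat.card {t : BinaryTree Unit // P t.toBools} :=
  Nat.card_congr <| (Equiv.subtypeSubtypeEquivSubtype hP).symm.trans
    (equivIsDyck.subtypeEquiv fun t => by rw [coe_equivIsDyck]).symm

/-- The joint distribution of (valleys, double rises) on Dyck paths of semilength `n`
is symmetric. -/
theorem stmt6 (n a b : ℕ) :
    Nat.card {w : List Bool // w.length = 2 * n ∧ IsDyck w ∧
        numValleys w = a ∧ numDR w = b} =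
    Nat.card {w : List Bool // w.length = 2 * n ∧ IsDyck w ∧
        numValleys w = b ∧ numDR w = a} := by
  rw [card_subtype_eq_card_binaryTree fun h => h.2.1, card_subtype_eq_card_binaryTree fun h => h.2.1]
  refine Nat.card_congr ((mirror_involutive.toPerm _).subtypeEquiv fun t => ?_)
  simp [and_comm]
end

section
/- For all i, j, n, the number of 132-avoiding permutations of {1,...,n} with i fixed points and j excedances equals the number of Dyck paths of semilength n with i centered tunnels and j left tunnels. -/
namespace Aux10

/-! ### Balance infrastructure -/

def bal (w : List Bool) : ℤ := (w.count true : ℤ) - (w.count false : ℤ)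

lemma bal_nil : bal [] = 0 := rfl

lemma bal_append (u v : List Bool) : bal (u ++ v) = bal u + bal v := by
  simp [bal, List.count_append]; ring

lemma bal_cons (b : Bool) (w : List Bool) :
    bal (b :: w) = (if b then 1 else -1) + bal w := by
  cases b <;> simp [bal, List.count_cons] <;> ring

lemma isDyck_iff (w : List Bool) :
    IsDyck w ↔ bal w = 0 ∧ ∀ k, 0 ≤ bal (w.take k) := by
  constructor
  · rintro ⟨h1, h2⟩
    refine ⟨by simp [bal]; omega, fun k => ?_⟩
    rcases le_or_gt w.length k with h | h
    · rw [List.take_of_length_le h]; simp [bal]; omega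
    · have := h2 k h; simp [bal]; omega
  · rintro ⟨h1, h2⟩
    refine ⟨by simp [bal] at h1; omega, fun k _ => ?_⟩
    have := h2 k; simp [bal] at this; omega

lemma bal_take_nonneg {w : List Bool} (h : IsDyck w) (k : ℕ) : 0 ≤ bal (w.take k) :=
  ((isDyck_iff w).1 h).2 k

lemma bal_eq_zero {w : List Bool} (h : IsDyck w) : bal w = 0 := ((isDyck_iff w).1 h).1

lemma length_even {w : List Bool} (h : IsDyck w) : ∃ a, w.length = 2 * a := by
  have h1 := h.1
  have : w.length = w.count true + w.count false := by
    have := w.count_true_add_count_false; omega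
  exact ⟨w.count true, by omega⟩

lemma bal_take_succ (w : List Bool) (k : ℕ) (h : k < w.length) :
    bal (w.take (k+1)) = bal (w.take k) + (if w.getD k false then 1 else -1) := by
  rw [List.take_succ, bal_append]
  congr 1
  rw [List.getElem?_eq_getElem h]
  have hg : w.getD k false = w[k] := by
    simp [List.getD_eq_getElem?_getD, List.getElem?_eq_getElem h]
  rw [hg]
  cases w[k] <;> simp [bal]

lemma bal_drop (w : List Bool) (k : ℕ) : bal (w.drop k) = bal w - bal (w.take k) := by
  have : bal (w.take k) + bal (w.drop k) = bal w := by
    rw [← bal_append, List.take_append_drop]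
  omega

end Aux10
namespace Aux10

/-! ### The first-return composition of Dyck words -/

def dbuild (A B : List Bool) : List Bool := true :: (A ++ false :: B)

lemma dbuild_length (A B : List Bool) :
    (dbuild A B).length = A.length + B.length + 2 := by simp [dbuild]; omega

lemma getD_dbuild_left (A B : List Bool) {i : ℕ} (h : i < A.length) (d : Bool) :
    (dbuild A B).getD (i+1) d = A.getD i d := by
  simp only [dbuild, List.getD_cons_succ]
  exact List.getD_append _ _ _ _ h

lemma getD_dbuild_mid (A B : List Bool) (d : Bool) :
    (dbuild A B).getD (A.length + 1) d = false := by
  simp only [dbuild, List.getD_cons_succ]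
  rw [List.getD_append_right _ _ _ _ le_rfl]
  simp

lemma getD_dbuild_right (A B : List Bool) (i : ℕ) (d : Bool) :
    (dbuild A B).getD (A.length + 2 + i) d = B.getD i d := by
  have h1 : A.length + 2 + i = (A.length + 1 + i) + 1 := by omega
  rw [h1]
  simp only [dbuild, List.getD_cons_succ]
  rw [List.getD_append_right _ _ _ _ (by omega)]
  have h2 : A.length + 1 + i - A.length = i + 1 := by omega
  rw [h2, List.getD_cons_succ]

lemma drop_dbuild_left (A B : List Bool) {i : ℕ} (h : i ≤ A.length) :
    (dbuild A B).drop (i+1) = A.drop i ++ false :: B := by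
  simp only [dbuild, List.drop_succ_cons, List.drop_append]
  have : i - A.length = 0 := by omega
  rw [this, List.drop_zero]

lemma drop_dbuild_right (A B : List Bool) (i : ℕ) :
    (dbuild A B).drop (A.length + 2 + i) = B.drop i := by
  have h1 : A.length + 2 + i = (A.length + 1 + i) + 1 := by omega
  rw [h1]
  simp only [dbuild, List.drop_succ_cons, List.drop_append]
  rw [List.drop_of_length_le (by omega)]
  have h2 : A.length + 1 + i - A.length = i + 1 := by omega
  rw [h2, List.nil_append, List.drop_succ_cons]

lemma take_append_left {α} (A X : List α) {m : ℕ} (h : m ≤ A.length) :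
    (A ++ X).take m = A.take m := by
  rw [List.take_append]
  have : m - A.length = 0 := by omega
  rw [this, List.take_zero, List.append_nil]

lemma isDyck_dbuild {A B : List Bool} (hA : IsDyck A) (hB : IsDyck B) :
    IsDyck (dbuild A B) := by
  rw [isDyck_iff] at hA hB ⊢
  constructor
  · simp [dbuild, bal_cons, bal_append, hA.1, hB.1]
  · intro k
    cases k with
    | zero => simp [bal]
    | succ j =>
      simp only [dbuild, List.take_succ_cons, bal_cons]
      rw [if_pos trivial, List.take_append, bal_append]
      have h1 := hA.2 j
      have h2 : -1 ≤ bal ((false :: B).take (j - A.length)) := by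
        cases hj : j - A.length with
        | zero => simp [bal]
        | succ m =>
          rw [List.take_succ_cons, bal_cons, if_neg (Bool.false_ne_true)]
          have := hB.2 m
          omega
      omega

/-- First-return decomposition of a nonempty Dyck word. -/
lemma exists_decomp {w : List Bool} (h : IsDyck w) (hne : w ≠ []) :
    ∃ A B, IsDyck A ∧ IsDyck B ∧ w = dbuild A B := by
  rw [isDyck_iff] at h
  obtain ⟨hbal, hpre⟩ := h
  have hlen : 0 < w.length := List.length_pos_iff.2 hne
  have hfirst : w.getD 0 false = true := by
    by_contra hf
    have h1 := bal_take_succ w 0 hlen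
    rw [if_neg hf] at h1
    have h2 := hpre 1
    norm_num [bal_nil] at h1
    omega
  have hP : ∃ k, 1 ≤ k ∧ bal (w.take k) = 0 :=
    ⟨w.length, by omega, by rw [List.take_of_length_le le_rfl]; exact hbal⟩
  classical
  set k0 := Nat.find hP with hk0def
  obtain ⟨hk1, hk0bal⟩ : 1 ≤ k0 ∧ bal (w.take k0) = 0 := Nat.find_spec hP
  have hmin' : ∀ m, m < k0 → ¬(1 ≤ m ∧ bal (w.take m) = 0) := fun m hm => Nat.find_min hP hm
  have hpos : ∀ m, 1 ≤ m → m < k0 → 1 ≤ bal (w.take m) := by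
    intro m hm1 hmk
    have h1 := hpre m
    have h2 : ¬(1 ≤ m ∧ bal (w.take m) = 0) := hmin' m hmk
    by_contra hc
    exact h2 ⟨hm1, by omega⟩
  have hk2 : 2 ≤ k0 := by
    by_contra hc
    have hk0eq : k0 = 1 := by omega
    have h1 := bal_take_succ w 0 hlen
    rw [if_pos hfirst] at h1
    rw [hk0eq] at hk0bal
    norm_num [bal_nil] at h1
    omega
  have hk0len : k0 ≤ w.length := by
    by_contra hc
    push_neg at hc
    have h0 : bal (w.take w.length) = 0 := by rw [List.take_of_length_le le_rfl]; exact hbal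
    exact (hmin' w.length hc) ⟨by omega, h0⟩
  have hlast : w.getD (k0 - 1) false = false := by
    have h1 := bal_take_succ w (k0 - 1) (by omega)
    have h2 : k0 - 1 + 1 = k0 := by omega
    rw [h2] at h1
    have h3 := hpos (k0 - 1) (by omega) (by omega)
    by_contra hc
    simp only [Bool.not_eq_false] at hc
    rw [if_pos hc] at h1
    omega
  obtain ⟨rest, rfl⟩ : ∃ rest, w = true :: rest := by
    cases w with
    | nil => simp at hlen
    | cons c rest =>
      refine ⟨rest, ?_⟩
      simp only [List.getD_cons_zero] at hfirst
      rw [hfirst]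
  have hrlen : k0 - 1 ≤ rest.length := by simp at hk0len; omega
  have htake : ∀ m, bal (rest.take m) = bal ((true :: rest).take (m + 1)) - 1 := by
    intro m
    rw [List.take_succ_cons, bal_cons, if_pos rfl]
    omega
  refine ⟨rest.take (k0 - 2), rest.drop (k0 - 1), ?_, ?_, ?_⟩
  · rw [isDyck_iff]
    constructor
    · have h1 := htake (k0 - 2)
      have h2 := bal_take_succ (true :: rest) (k0 - 1) (by simp; omega)
      rw [if_neg (by rw [hlast]; exact Bool.false_ne_true)] at h2
      have h3 : k0 - 2 + 1 = k0 - 1 := by omega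
      have h4 : k0 - 1 + 1 = k0 := by omega
      rw [h3] at h1
      rw [h4] at h2
      omega
    · intro k
      rw [List.take_take, htake]
      have h5 : min k (k0 - 2) + 1 < k0 ∨ k0 = 2 ∧ min k (k0-2) = 0 := by omega
      rcases h5 with h5 | ⟨h5, h6⟩
      · have := hpos (min k (k0 - 2) + 1) (by omega) h5
        omega
      · rw [h6]
        simp [bal]
  · rw [isDyck_iff]
    have hdrop : (true :: rest).drop k0 = rest.drop (k0 - 1) := by
      obtain ⟨m, hm⟩ : ∃ m, k0 = m + 1 := ⟨k0 - 1, by omega⟩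
      rw [hm, List.drop_succ_cons]
      congr 1
    constructor
    · rw [← hdrop, bal_drop]
      omega
    · intro k
      rw [← hdrop, List.take_drop, bal_drop, List.take_take]
      have h1 : min k0 (k0 + k) = k0 := by omega
      rw [h1, hk0bal]
      have := hpre (k0 + k)
      omega
  · have hd : rest.drop (k0 - 2) = false :: rest.drop (k0 - 1) := by
      have hb : k0 - 2 < rest.length := by omega
      rw [List.drop_eq_getElem_cons hb]
      have h1 : rest[k0-2] = false := by
        rw [← List.getD_eq_getElem rest false hb]
        have h2 : (true :: rest).getD (k0 - 1) false = rest.getD (k0 - 2) false := by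
          have : k0 - 1 = (k0 - 2) + 1 := by omega
          rw [this, List.getD_cons_succ]
        rw [← h2, hlast]
      rw [h1]
      have : k0 - 2 + 1 = k0 - 1 := by omega
      rw [this]
    rw [dbuild, ← hd, List.take_append_drop]

end Aux10
namespace Aux10

/-- If `(0, j)` begins a tunnel of `dbuild A B`, then `j = A.length + 1`. -/
lemma tunnel_first (A B : List Bool) (hA : IsDyck A) {j : ℕ} (hj : 1 ≤ j)
    (hgd : (dbuild A B).getD j true = false)
    (hD : IsDyck (((dbuild A B).drop 1).take (j - 1))) : j = A.length + 1 := by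
  have hdrop : (dbuild A B).drop 1 = A ++ false :: B := by
    have := drop_dbuild_left A B (i := 0) (by omega)
    simpa using this
  rw [hdrop] at hD
  rcases lt_trichotomy (j - 1) A.length with hc | hc | hc
  · exfalso
    rw [take_append_left _ _ (by omega)] at hD
    have h0 : bal (A.take (j-1)) = 0 := bal_eq_zero hD
    have h1 : A.getD (j-1) false = false := by
      have h2 : (dbuild A B).getD j true = A.getD (j-1) true := by
        obtain ⟨m, rfl⟩ : ∃ m, j = m + 1 := ⟨j - 1, by omega⟩
        rw [getD_dbuild_left A B (by omega)]
        simp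
      rw [h2] at hgd
      rw [List.getD_eq_getElem A true hc] at hgd
      rw [List.getD_eq_getElem A false hc, hgd]
    have h3 := bal_take_succ A (j-1) hc
    rw [if_neg (by rw [h1]; exact Bool.false_ne_true), h0] at h3
    have h4 := bal_take_nonneg hA (j - 1 + 1)
    omega
  · omega
  · exfalso
    have h1 : ((A ++ false :: B).take (j-1)).take (A.length + 1) = A ++ [false] := by
      rw [List.take_take, min_eq_left (by omega), List.take_append,
        List.take_of_length_le (by omega)]
      congr 1
      have : A.length + 1 - A.length = 1 := by omega
      rw [this]
      simp
    have h2 := bal_take_nonneg hD (A.length + 1)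
    rw [h1, bal_append, bal_eq_zero hA, bal_cons, if_neg (Bool.false_ne_true), bal_nil] at h2
    omega

/-- If `(i, j)` is a tunnel of `dbuild A B` with `1 ≤ i ≤ A.length`, then `j ≤ A.length`. -/
lemma tunnel_left (A B : List Bool) (hA : IsDyck A) {i j : ℕ} (hi1 : 1 ≤ i)
    (hi2 : i ≤ A.length) (hij : i < j)
    (hgdi : (dbuild A B).getD i false = true)
    (hD : IsDyck (((dbuild A B).drop (i+1)).take (j - i - 1))) : j ≤ A.length := by
  by_contra hc
  push_neg at hc
  have hgA : A.getD (i-1) false = true := by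
    obtain ⟨m, rfl⟩ : ∃ m, i = m + 1 := ⟨i - 1, by omega⟩
    rw [getD_dbuild_left A B (by omega)] at hgdi
    simpa using hgdi
  have hbali : 1 ≤ bal (A.take i) := by
    have h3 := bal_take_succ A (i-1) (by omega)
    rw [if_pos hgA] at h3
    have h4 := bal_take_nonneg hA (i-1)
    have h5 : i - 1 + 1 = i := by omega
    rw [h5] at h3
    omega
  have hdrop : (dbuild A B).drop (i+1) = A.drop i ++ false :: B :=
    drop_dbuild_left A B (by omega)
  rw [hdrop] at hD
  have hbaldrop : bal (A.drop i) ≤ -1 := by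
    rw [bal_drop, bal_eq_zero hA]
    omega
  rcases eq_or_lt_of_le (show A.length + 1 ≤ j by omega) with hc2 | hc2
  · have h1 : (A.drop i ++ false :: B).take (j - i - 1) = A.drop i := by
      rw [take_append_left _ _ (by simp; omega)]
      rw [List.take_of_length_le (by simp; omega)]
    rw [h1] at hD
    have := bal_eq_zero hD
    omega
  · have h1 : ((A.drop i ++ false :: B).take (j - i - 1)).take (A.length - i + 1)
        = A.drop i ++ [false] := by
      rw [List.take_take, min_eq_left (by omega), List.take_append,
        List.take_of_length_le (by simp)]
      congr 1
      have : A.length - i + 1 - (A.drop i).length = 1 := by rw [List.length_drop]; omega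
      rw [this]
      simp
    have h2 := bal_take_nonneg hD (A.length - i + 1)
    rw [h1, bal_append, bal_cons, if_neg (Bool.false_ne_true), bal_nil] at h2
    omega

lemma tunnels_dbuild (A B : List Bool) (hA : IsDyck A) (hB : IsDyck B) :
    tunnels (dbuild A B) = insert (0, A.length + 1)
      (((tunnels A).image (fun p => (p.1 + 1, p.2 + 1))) ∪
       ((tunnels B).image (fun p => (p.1 + (A.length + 2), p.2 + (A.length + 2))))) := by
  ext ⟨i, j⟩
  simp only [tunnels, Finset.mem_filter, Finset.mem_product, Finset.mem_range,
    Finset.mem_insert, Finset.mem_union, Finset.mem_image, Prod.mk.injEq, Prod.exists,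
    dbuild_length]
  constructor
  · rintro ⟨⟨hilen, hjlen⟩, hij, hgi, hgj, hD⟩
    rcases Nat.lt_or_ge i 1 with hi0 | hi1
    · -- i = 0
      have hi0 : i = 0 := by omega
      subst hi0
      left
      have := tunnel_first A B hA (by omega) hgj (by simpa using hD)
      exact ⟨rfl, this⟩
    · rcases Nat.lt_or_ge i (A.length + 1) with hiA | hiA
      · -- 1 ≤ i ≤ A.length : tunnel of A
        right; left
        have hjA : j ≤ A.length := tunnel_left A B hA hi1 (by omega) hij hgi hD
        refine ⟨i - 1, j - 1, ⟨⟨⟨by omega, by omega⟩, by omega, ?_, ?_, ?_⟩, by omega, by omega⟩⟩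
        · obtain ⟨m, rfl⟩ : ∃ m, i = m + 1 := ⟨i - 1, by omega⟩
          rw [getD_dbuild_left A B (by omega)] at hgi
          simpa using hgi
        · obtain ⟨m, rfl⟩ : ∃ m, j = m + 1 := ⟨j - 1, by omega⟩
          rw [getD_dbuild_left A B (by omega)] at hgj
          simpa using hgj
        · have hdrop : (dbuild A B).drop (i+1) = A.drop i ++ false :: B :=
            drop_dbuild_left A B (by omega)
          rw [hdrop, take_append_left _ _ (by simp; omega)] at hD
          have h1 : j - 1 - (i - 1) - 1 = j - i - 1 := by omega
          have h2 : i - 1 + 1 = i := by omega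
          rw [h1, h2]
          exact hD
      · rcases Nat.lt_or_ge i (A.length + 2) with hiM | hiM
        · -- i = A.length + 1 : impossible, down step
          exfalso
          have : i = A.length + 1 := by omega
          subst this
          rw [getD_dbuild_mid] at hgi
          exact Bool.false_ne_true hgi
        · -- tunnel of B
          right; right
          refine ⟨i - (A.length + 2), j - (A.length + 2),
            ⟨⟨⟨by omega, by omega⟩, by omega, ?_, ?_, ?_⟩, by omega, by omega⟩⟩
          · obtain ⟨m, hm⟩ : ∃ m, i = A.length + 2 + m := ⟨i - (A.length+2), by omega⟩
            rw [hm, getD_dbuild_right] at hgi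
            rw [hm]
            simpa using hgi
          · obtain ⟨m, hm⟩ : ∃ m, j = A.length + 2 + m := ⟨j - (A.length+2), by omega⟩
            rw [hm, getD_dbuild_right] at hgj
            rw [hm]
            simpa using hgj
          · obtain ⟨m, hm⟩ : ∃ m, i = A.length + 2 + m := ⟨i - (A.length+2), by omega⟩
            have hdrop : (dbuild A B).drop (i+1) = B.drop (m+1) := by
              rw [hm, show A.length + 2 + m + 1 = A.length + 2 + (m+1) by omega,
                drop_dbuild_right]
            rw [hdrop] at hD
            have h1 : j - (A.length + 2) - (i - (A.length + 2)) - 1 = j - i - 1 := by omega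
            have h2 : i - (A.length + 2) + 1 = m + 1 := by omega
            rw [h1, h2]
            exact hD
  · rintro (⟨hi0, hj0⟩ | h | h)
    case inr.inl =>
      obtain ⟨i', j', ⟨⟨⟨hi'l, hj'l⟩, hij', hgi', hgj', hD'⟩, hi'e, hj'e⟩⟩ := h
      subst hi'e; subst hj'e
      refine ⟨⟨by omega, by omega⟩, by omega, ?_, ?_, ?_⟩
      · rw [getD_dbuild_left A B hi'l]; exact hgi'
      · rw [getD_dbuild_left A B hj'l]; exact hgj'
      · have hdrop : (dbuild A B).drop (i' + 1 + 1) = A.drop (i'+1) ++ false :: B :=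
          drop_dbuild_left A B (by omega)
        rw [hdrop]
        have h1 : j' + 1 - (i' + 1) - 1 = j' - i' - 1 := by omega
        rw [h1, take_append_left _ _ (by simp; omega)]
        exact hD'
    case inr.inr =>
      obtain ⟨i', j', ⟨⟨⟨hi'l, hj'l⟩, hij', hgi', hgj', hD'⟩, hi'e, hj'e⟩⟩ := h
      subst hi'e; subst hj'e
      refine ⟨⟨by omega, by omega⟩, by omega, ?_, ?_, ?_⟩
      · rw [show i' + (A.length + 2) = A.length + 2 + i' by omega, getD_dbuild_right]
        exact hgi'
      · rw [show j' + (A.length + 2) = A.length + 2 + j' by omega, getD_dbuild_right]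
        exact hgj'
      · have hdrop : (dbuild A B).drop (i' + (A.length + 2) + 1) = B.drop (i'+1) := by
          rw [show i' + (A.length + 2) + 1 = A.length + 2 + (i'+1) by omega,
            drop_dbuild_right]
        rw [hdrop]
        have h1 : j' + (A.length + 2) - (i' + (A.length + 2)) - 1 = j' - i' - 1 := by omega
        rw [h1]
        exact hD'
    · subst hi0; subst hj0
      refine ⟨⟨by omega, by omega⟩, by omega, rfl, ?_, ?_⟩
      · rw [getD_dbuild_mid]
      · have hdrop : (dbuild A B).drop 1 = A ++ false :: B := by
          have := drop_dbuild_left A B (i := 0) (by omega)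
          simpa using this
        rw [hdrop]
        have : A.length + 1 - 0 - 1 = A.length := by omega
        rw [this, take_append_left _ _ le_rfl, List.take_of_length_le le_rfl]
        exact hA

end Aux10
namespace Aux10

lemma tunnels_nil : tunnels [] = ∅ := by
  simp [tunnels]

lemma ctr_nil (r : ℤ) : ctr r [] = 0 := by simp [ctr, tunnels_nil]

lemma ltr_nil (r : ℤ) : ltr r [] = 0 := by simp [ltr, tunnels_nil]

lemma mem_tunnels_bounds {w : List Bool} {p : ℕ × ℕ} (h : p ∈ tunnels w) :
    p.1 < p.2 ∧ p.2 < w.length := by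
  simp only [tunnels, Finset.mem_filter, Finset.mem_product, Finset.mem_range] at h
  exact ⟨h.2.1, h.1.2⟩

/-- Generic counting of midpoint-filtered tunnels of a composed Dyck path. -/
lemma card_tunnels_dbuild (A B : List Bool) (hA : IsDyck A) (hB : IsDyck B)
    (P : ℤ → Prop) [DecidablePred P] :
    ((tunnels (dbuild A B)).filter (fun p => P ((p.1 : ℤ) + p.2 + 1))).card =
      (if P ((A.length : ℤ) + 2) then 1 else 0)
      + ((tunnels A).filter (fun p => P ((p.1 : ℤ) + p.2 + 3))).card
      + ((tunnels B).filter (fun p => P ((p.1 : ℤ) + p.2 + 1 + 2*(A.length : ℤ) + 4))).card := by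
  classical
  rw [tunnels_dbuild A B hA hB, Finset.filter_insert, Finset.filter_union,
    Finset.filter_image, Finset.filter_image]
  have e1 : (Finset.filter
        (fun a : ℕ × ℕ => P ((↑(a.1 + 1) : ℤ) + ↑(a.2 + 1) + 1)) (tunnels A))
      = (tunnels A).filter (fun p => P ((p.1 : ℤ) + p.2 + 3)) := by
    apply Finset.filter_congr
    intro q _
    have : ((↑(q.1 + 1) : ℤ) + ↑(q.2 + 1) + 1) = (q.1 : ℤ) + q.2 + 3 := by push_cast; ring
    rw [this]
  have e2 : (Finset.filter
        (fun a : ℕ × ℕ => P ((↑(a.1 + (A.length + 2)) : ℤ) + ↑(a.2 + (A.length + 2)) + 1))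
        (tunnels B))
      = (tunnels B).filter (fun p => P ((p.1 : ℤ) + p.2 + 1 + 2*(A.length : ℤ) + 4)) := by
    apply Finset.filter_congr
    intro q _
    have : ((↑(q.1 + (A.length + 2)) : ℤ) + ↑(q.2 + (A.length + 2)) + 1)
        = (q.1 : ℤ) + q.2 + 1 + 2*(A.length : ℤ) + 4 := by push_cast; ring
    rw [this]
  rw [e1, e2]
  have hinj1 : Function.Injective (fun p : ℕ × ℕ => (p.1 + 1, p.2 + 1)) := by
    intro p q h; simp only [Prod.mk.injEq] at h; ext <;> omega
  have hinj2 : Function.Injective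
      (fun p : ℕ × ℕ => (p.1 + (A.length + 2), p.2 + (A.length + 2))) := by
    intro p q h; simp only [Prod.mk.injEq] at h; ext <;> omega
  have hdisj : Disjoint
      (((tunnels A).filter (fun p => P ((p.1 : ℤ) + p.2 + 3))).image
        (fun p => (p.1 + 1, p.2 + 1)))
      (((tunnels B).filter (fun p => P ((p.1 : ℤ) + p.2 + 1 + 2*(A.length : ℤ) + 4))).image
        (fun p => (p.1 + (A.length + 2), p.2 + (A.length + 2)))) := by
    rw [Finset.disjoint_left]
    rintro ⟨x, y⟩ h1 h2
    simp only [Finset.mem_image, Prod.mk.injEq, Prod.exists] at h1 h2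
    obtain ⟨i1, j1, hm1, he1, hf1⟩ := h1
    obtain ⟨i2, j2, hm2, he2, hf2⟩ := h2
    have hb1 := mem_tunnels_bounds (Finset.mem_of_mem_filter _ hm1)
    omega
  have hcard : ((((tunnels A).filter (fun p => P ((p.1 : ℤ) + p.2 + 3))).image
        (fun p => (p.1 + 1, p.2 + 1))) ∪
      (((tunnels B).filter (fun p => P ((p.1 : ℤ) + p.2 + 1 + 2*(A.length : ℤ) + 4))).image
        (fun p => (p.1 + (A.length + 2), p.2 + (A.length + 2))))).card
      = ((tunnels A).filter (fun p => P ((p.1 : ℤ) + p.2 + 3))).card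
        + ((tunnels B).filter (fun p => P ((p.1 : ℤ) + p.2 + 1 + 2*(A.length : ℤ) + 4))).card := by
    rw [Finset.card_union_of_disjoint hdisj, Finset.card_image_of_injective _ hinj1,
      Finset.card_image_of_injective _ hinj2]
  have hnotmem : (0, A.length + 1) ∉
      ((((tunnels A).filter (fun p => P ((p.1 : ℤ) + p.2 + 3))).image
        (fun p => (p.1 + 1, p.2 + 1))) ∪
      (((tunnels B).filter (fun p => P ((p.1 : ℤ) + p.2 + 1 + 2*(A.length : ℤ) + 4))).image
        (fun p => (p.1 + (A.length + 2), p.2 + (A.length + 2))))) := by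
    rw [Finset.mem_union]
    rintro (h | h) <;>
    · simp only [Finset.mem_image, Prod.mk.injEq, Prod.exists] at h
      obtain ⟨i1, j1, hm1, he1, hf1⟩ := h
      omega
  have houter : ((↑(0:ℕ) : ℤ) + ↑(A.length + 1) + 1) = (A.length : ℤ) + 2 := by
    push_cast; ring
  by_cases hP : P ((A.length : ℤ) + 2)
  · rw [if_pos (by rw [houter]; exact hP), if_pos hP,
      Finset.card_insert_of_notMem hnotmem, hcard]
    ring
  · rw [if_neg (by rw [houter]; exact hP), if_neg hP, hcard]
    omega

section Rec

variable (A B : List Bool) (hA : IsDyck A) (hB : IsDyck B) (a b : ℕ)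
  (ha : A.length = 2 * a) (hb : B.length = 2 * b) (r : ℤ)

include hA hB ha hb in
lemma ctr_dbuild :
    ctr r (dbuild A B) = (if r = b then 1 else 0) + ctr (r - b) A + ctr (r + a + 1) B := by
  classical
  unfold ctr
  have := card_tunnels_dbuild A B hA hB (fun x : ℤ => x = ((dbuild A B).length : ℤ) - 2*r)
  rw [this]
  have hlen : ((dbuild A B).length : ℤ) = 2*a + 2*b + 2 := by
    rw [dbuild_length]; push_cast; omega
  have hA' : (A.length : ℤ) = 2*a := by rw [ha]; push_cast; ring
  have hB' : (B.length : ℤ) = 2*b := by rw [hb]; push_cast; ring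
  congr 1
  · congr 1
    · rw [hlen, hA']
      by_cases hr : r = (b:ℤ)
      · rw [if_pos (by omega), if_pos hr]
      · rw [if_neg (by omega), if_neg hr]
    · refine congrArg Finset.card (Finset.filter_congr ?_)
      intro q _
      rw [hlen, hA']
      constructor <;> intro h <;> omega
  · refine congrArg Finset.card (Finset.filter_congr ?_)
    intro q _
    rw [hlen, hA', hB']
    constructor <;> intro h <;> omega

include hA hB ha hb in
lemma ltr_dbuild :
    ltr r (dbuild A B) = (if r < b then 1 else 0) + ltr (r - b) A + ltr (r + a + 1) B := by
  classical
  unfold ltr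
  have := card_tunnels_dbuild A B hA hB (fun x : ℤ => x < ((dbuild A B).length : ℤ) - 2*r)
  rw [this]
  have hlen : ((dbuild A B).length : ℤ) = 2*a + 2*b + 2 := by
    rw [dbuild_length]; push_cast; omega
  have hA' : (A.length : ℤ) = 2*a := by rw [ha]; push_cast; ring
  have hB' : (B.length : ℤ) = 2*b := by rw [hb]; push_cast; ring
  congr 1
  · congr 1
    · rw [hlen, hA']
      by_cases hr : r < (b:ℤ)
      · rw [if_pos (by omega), if_pos hr]
      · rw [if_neg (by omega), if_neg hr]
    · refine congrArg Finset.card (Finset.filter_congr ?_)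
      intro q _
      rw [hlen, hA']
      constructor <;> intro h <;> omega
  · refine congrArg Finset.card (Finset.filter_congr ?_)
    intro q _
    rw [hlen, hA', hB']
    constructor <;> intro h <;> omega

end Rec

end Aux10
namespace Aux10

section Perm

variable {n a b : ℕ}

/-- Forward map of the block composition of permutations. -/
def pfun (hn : a + 1 + b = n) (σ : Equiv.Perm (Fin a)) (τ : Equiv.Perm (Fin b))
    (p : Fin n) : Fin n :=
  if hp : (p : ℕ) < a then ⟨(σ ⟨p, hp⟩ : ℕ) + b, by have := (σ ⟨p, hp⟩).isLt; omega⟩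
  else if hp2 : (p : ℕ) = a then ⟨a + b, by omega⟩
  else ⟨(τ ⟨(p : ℕ) - (a + 1), by have := p.isLt; omega⟩ : ℕ), by
    have := (τ ⟨(p : ℕ) - (a + 1), by have := p.isLt; omega⟩).isLt; omega⟩

lemma pfun_left (hn : a + 1 + b = n) (σ : Equiv.Perm (Fin a)) (τ : Equiv.Perm (Fin b))
    {p : Fin n} (hp : (p : ℕ) < a) :
    (pfun hn σ τ p : ℕ) = (σ ⟨p, hp⟩ : ℕ) + b := by
  simp only [pfun, dif_pos hp]

lemma pfun_mid (hn : a + 1 + b = n) (σ : Equiv.Perm (Fin a)) (τ : Equiv.Perm (Fin b))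
    {p : Fin n} (hp : (p : ℕ) = a) :
    (pfun hn σ τ p : ℕ) = a + b := by
  simp only [pfun, dif_neg (by omega : ¬ (p : ℕ) < a), dif_pos hp]

lemma pfun_right (hn : a + 1 + b = n) (σ : Equiv.Perm (Fin a)) (τ : Equiv.Perm (Fin b))
    {p : Fin n} (hp : a < (p : ℕ)) :
    (pfun hn σ τ p : ℕ) = (τ ⟨(p : ℕ) - (a + 1), by have := p.isLt; omega⟩ : ℕ) := by
  simp only [pfun, dif_neg (by omega : ¬ (p : ℕ) < a), dif_neg (by omega : ¬ (p : ℕ) = a)]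

lemma pfun_inj (hn : a + 1 + b = n) (σ : Equiv.Perm (Fin a)) (τ : Equiv.Perm (Fin b)) :
    Function.Injective (pfun hn σ τ) := by
  intro p q heq
  have hval : (pfun hn σ τ p : ℕ) = (pfun hn σ τ q : ℕ) := by rw [heq]
  rcases lt_trichotomy (p : ℕ) a with hp | hp | hp <;>
    rcases lt_trichotomy (q : ℕ) a with hq | hq | hq
  · rw [pfun_left hn σ τ hp, pfun_left hn σ τ hq] at hval
    have h1 : σ ⟨p, hp⟩ = σ ⟨q, hq⟩ := Fin.ext (by omega)
    have h2 := σ.injective h1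
    have h3 := congrArg Fin.val h2
    simp only at h3
    exact Fin.ext h3
  · rw [pfun_left hn σ τ hp, pfun_mid hn σ τ hq] at hval
    have := (σ ⟨p, hp⟩).isLt; omega
  · rw [pfun_left hn σ τ hp, pfun_right hn σ τ hq] at hval
    have := (σ ⟨p, hp⟩).isLt
    have := (τ ⟨(q : ℕ) - (a + 1), by have := q.isLt; omega⟩).isLt
    omega
  · rw [pfun_mid hn σ τ hp, pfun_left hn σ τ hq] at hval
    have := (σ ⟨q, hq⟩).isLt; omega
  · exact Fin.ext (by omega)
  · rw [pfun_mid hn σ τ hp, pfun_right hn σ τ hq] at hval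
    have := (τ ⟨(q : ℕ) - (a + 1), by have := q.isLt; omega⟩).isLt
    omega
  · rw [pfun_right hn σ τ hp, pfun_left hn σ τ hq] at hval
    have := (σ ⟨q, hq⟩).isLt
    have := (τ ⟨(p : ℕ) - (a + 1), by have := p.isLt; omega⟩).isLt
    omega
  · rw [pfun_right hn σ τ hp, pfun_mid hn σ τ hq] at hval
    have := (τ ⟨(p : ℕ) - (a + 1), by have := p.isLt; omega⟩).isLt
    omega
  · rw [pfun_right hn σ τ hp, pfun_right hn σ τ hq] at hval
    have h1 : τ ⟨(p : ℕ) - (a + 1), by have := p.isLt; omega⟩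
        = τ ⟨(q : ℕ) - (a + 1), by have := q.isLt; omega⟩ := Fin.ext (by omega)
    have h2 := τ.injective h1
    have h3 := congrArg Fin.val h2
    simp only at h3
    exact Fin.ext (by omega)

/-- Block composition of permutations: `σ` on the first `a` positions (shifted up by `b`),
the maximum at position `a`, and `τ` on the last `b` positions. -/
noncomputable def pbuild (hn : a + 1 + b = n) (σ : Equiv.Perm (Fin a))
    (τ : Equiv.Perm (Fin b)) : Equiv.Perm (Fin n) :=
  Equiv.ofBijective (pfun hn σ τ) (Finite.injective_iff_bijective.1 (pfun_inj hn σ τ))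

lemma pbuild_apply (hn : a + 1 + b = n) (σ : Equiv.Perm (Fin a)) (τ : Equiv.Perm (Fin b))
    (p : Fin n) : pbuild hn σ τ p = pfun hn σ τ p := rfl

end Perm

end Aux10
namespace Aux10

section Perm

variable {n a b : ℕ}

lemma avoids_pbuild (hn : a + 1 + b = n) (σ : Equiv.Perm (Fin a)) (τ : Equiv.Perm (Fin b)) :
    Avoids132 (pbuild hn σ τ) ↔ Avoids132 σ ∧ Avoids132 τ := by
  have rangeL : ∀ p : Fin n, ((p : ℕ) < a) →
      b ≤ (pbuild hn σ τ p : ℕ) ∧ (pbuild hn σ τ p : ℕ) < a + b := by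
    intro p hp
    rw [pbuild_apply, pfun_left hn σ τ hp]
    have := (σ ⟨p, hp⟩).isLt
    omega
  have rangeM : ∀ p : Fin n, ((p : ℕ) = a) → (pbuild hn σ τ p : ℕ) = a + b := by
    intro p hp
    rw [pbuild_apply, pfun_mid hn σ τ hp]
  have rangeR : ∀ p : Fin n, (a < (p : ℕ)) → (pbuild hn σ τ p : ℕ) < b := by
    intro p hp
    rw [pbuild_apply, pfun_right hn σ τ hp]
    exact (τ _).isLt
  constructor
  · intro hπ
    constructor
    · rintro ⟨i, j, k, hij, hjk, h1, h2⟩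
      apply hπ
      have hi : (i : ℕ) < n := by have := i.isLt; omega
      have hj : (j : ℕ) < n := by have := j.isLt; omega
      have hk : (k : ℕ) < n := by have := k.isLt; omega
      have eL : ∀ (x : Fin a) (hx : (x : ℕ) < n),
          (pbuild hn σ τ ⟨(x : ℕ), hx⟩ : ℕ) = (σ x : ℕ) + b := by
        intro x hx
        rw [pbuild_apply, pfun_left hn σ τ (show ((⟨(x:ℕ), hx⟩ : Fin n) : ℕ) < a from x.isLt)]
      refine ⟨⟨i, hi⟩, ⟨j, hj⟩, ⟨k, hk⟩, ?_, ?_, ?_, ?_⟩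
      · exact Fin.lt_def.2 (Fin.lt_def.1 hij)
      · exact Fin.lt_def.2 (Fin.lt_def.1 hjk)
      · rw [Fin.lt_def, eL i hi, eL k hk]
        have := Fin.lt_def.1 h1
        omega
      · rw [Fin.lt_def, eL j hj, eL k hk]
        have := Fin.lt_def.1 h2
        omega
    · rintro ⟨i, j, k, hij, hjk, h1, h2⟩
      apply hπ
      have hi : a + 1 + (i : ℕ) < n := by have := i.isLt; omega
      have hj : a + 1 + (j : ℕ) < n := by have := j.isLt; omega
      have hk : a + 1 + (k : ℕ) < n := by have := k.isLt; omega
      have eR : ∀ (x : Fin b) (hx : a + 1 + (x : ℕ) < n),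
          (pbuild hn σ τ ⟨a + 1 + (x : ℕ), hx⟩ : ℕ) = (τ x : ℕ) := by
        intro x hx
        rw [pbuild_apply, pfun_right hn σ τ (by simp; omega)]
        congr 1
        exact Fin.ext (by simp)
      refine ⟨⟨a + 1 + (i : ℕ), hi⟩, ⟨a + 1 + (j : ℕ), hj⟩, ⟨a + 1 + (k : ℕ), hk⟩,
        ?_, ?_, ?_, ?_⟩
      · exact Fin.lt_def.2 (by have := Fin.lt_def.1 hij; simp; omega)
      · exact Fin.lt_def.2 (by have := Fin.lt_def.1 hjk; simp; omega)
      · rw [Fin.lt_def, eR i hi, eR k hk]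
        exact Fin.lt_def.1 h1
      · rw [Fin.lt_def, eR j hj, eR k hk]
        exact Fin.lt_def.1 h2
  · rintro ⟨hσ, hτ⟩ ⟨i, j, k, hij, hjk, h1, h2⟩
    rw [Fin.lt_def] at hij hjk h1 h2
    rcases lt_trichotomy (k : ℕ) a with hk | hk | hk
    · -- all three in the left block
      have hia : (i : ℕ) < a := by omega
      have hja : (j : ℕ) < a := by omega
      apply hσ
      refine ⟨⟨i, hia⟩, ⟨j, hja⟩, ⟨k, hk⟩, Fin.lt_def.2 (by simpa using hij),
        Fin.lt_def.2 (by simpa using hjk), ?_, ?_⟩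
      · rw [Fin.lt_def]
        have e1 := pfun_left hn σ τ hia
        have e2 := pfun_left hn σ τ hk
        rw [pbuild_apply, pbuild_apply, e1, e2] at h1
        have : σ ⟨(i : ℕ), hia⟩ = σ (⟨(i : ℕ), hia⟩ : Fin a) := rfl
        omega
      · rw [Fin.lt_def]
        have e1 := pfun_left hn σ τ hja
        have e2 := pfun_left hn σ τ hk
        rw [pbuild_apply, pbuild_apply, e1, e2] at h2
        omega
    · -- k is the middle position: π k is the maximum, contradicting π k < π j
      have hja : (j : ℕ) < a := by omega
      have h3 := rangeM k hk
      have h4 := rangeL j hja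
      omega
    · -- k in the right block
      rcases lt_trichotomy (j : ℕ) a with hj | hj | hj
      · have h3 := rangeL i (by omega)
        have h4 := rangeR k hk
        omega
      · have h3 := rangeL i (by omega)
        have h4 := rangeR k hk
        omega
      · rcases lt_trichotomy (i : ℕ) a with hi | hi | hi
        · have h3 := rangeL i hi
          have h4 := rangeR k hk
          omega
        · have h3 := rangeM i hi
          have h4 := rangeR k hk
          omega
        · -- all three in the right block
          apply hτ
          have hi' : (i : ℕ) - (a+1) < b := by have := i.isLt; omega
          have hj' : (j : ℕ) - (a+1) < b := by have := j.isLt; omega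
          have hk' : (k : ℕ) - (a+1) < b := by have := k.isLt; omega
          refine ⟨⟨(i : ℕ) - (a+1), hi'⟩, ⟨(j : ℕ) - (a+1), hj'⟩, ⟨(k : ℕ) - (a+1), hk'⟩,
            Fin.lt_def.2 (by simp; omega), Fin.lt_def.2 (by simp; omega), ?_, ?_⟩
          · rw [Fin.lt_def]
            have e1 := pfun_right hn σ τ hi
            have e2 := pfun_right hn σ τ hk
            rw [pbuild_apply, pbuild_apply, e1, e2] at h1
            exact h1
          · rw [Fin.lt_def]
            have e1 := pfun_right hn σ τ hj
            have e2 := pfun_right hn σ τ hk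
            rw [pbuild_apply, pbuild_apply, e1, e2] at h2
            exact h2
  
end Perm

end Aux10
namespace Aux10

/-- Number of `r`-shifted fixed points. -/
def fpr (r : ℤ) {n : ℕ} (π : Equiv.Perm (Fin n)) : ℕ :=
  (Finset.univ.filter (fun p : Fin n => ((π p : ℕ) : ℤ) = ((p : ℕ) : ℤ) + r)).card

/-- Number of `r`-shifted excedances. -/
def exr (r : ℤ) {n : ℕ} (π : Equiv.Perm (Fin n)) : ℕ :=
  (Finset.univ.filter (fun p : Fin n => ((p : ℕ) : ℤ) + r < ((π p : ℕ) : ℤ))).card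

lemma fpCount_eq {n : ℕ} (π : Equiv.Perm (Fin n)) : fpCount π = fpr 0 π := by
  classical
  rw [fpCount, Nat.card_eq_fintype_card, Fintype.card_subtype, fpr]
  apply congrArg
  apply Finset.filter_congr
  intro i _
  rw [Fin.ext_iff]
  constructor <;> intro h <;> omega

lemma excCount_eq {n : ℕ} (π : Equiv.Perm (Fin n)) : excCount π = exr 0 π := by
  classical
  rw [excCount, Nat.card_eq_fintype_card, Fintype.card_subtype, exr]
  apply congrArg
  apply Finset.filter_congr
  intro i _
  rw [Fin.lt_def]
  constructor <;> intro h <;> omega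

lemma fpr_nil (r : ℤ) (π : Equiv.Perm (Fin 0)) : fpr r π = 0 := by
  simp [fpr]

lemma exr_nil (r : ℤ) (π : Equiv.Perm (Fin 0)) : exr r π = 0 := by
  simp [exr]

section Perm

variable {n a b : ℕ}

lemma card_filter_pbuild (hn : a + 1 + b = n) (σ : Equiv.Perm (Fin a))
    (τ : Equiv.Perm (Fin b)) (Q : ℤ → ℤ → Prop) [DecidableRel Q] :
    (Finset.univ.filter
      (fun p : Fin n => Q ((pbuild hn σ τ p : ℕ) : ℤ) ((p : ℕ) : ℤ))).card
    = (if Q (((a + b : ℕ)) : ℤ) (((a : ℕ)) : ℤ) then 1 else 0)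
    + (Finset.univ.filter
        (fun x : Fin a => Q ((((σ x : ℕ) + b : ℕ)) : ℤ) (((x : ℕ) : ℕ) : ℤ))).card
    + (Finset.univ.filter
        (fun x : Fin b => Q (((τ x : ℕ)) : ℤ) (((a + 1 + (x : ℕ) : ℕ)) : ℤ))).card := by
  classical
  subst hn
  have key : ∀ g : Fin (a+1+b) → ℕ, (∑ p, g p)
      = (∑ x : Fin a, g (Fin.castAdd b x.castSucc)) + g (Fin.castAdd b (Fin.last a))
        + ∑ x : Fin b, g (Fin.natAdd (a+1) x) := by
    intro g
    rw [Fin.sum_univ_add, Fin.sum_univ_castSucc]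
  rw [Finset.card_filter, Finset.card_filter, Finset.card_filter, key]
  have hmid : (if Q (((pbuild rfl σ τ (Fin.castAdd b (Fin.last a)) : Fin (a+1+b)) : ℕ) : ℤ)
        (((Fin.castAdd b (Fin.last a) : Fin (a+1+b)) : ℕ) : ℤ) then 1 else 0)
      = (if Q (((a + b : ℕ)) : ℤ) (((a : ℕ)) : ℤ) then 1 else 0) := by
    have hval : ((Fin.castAdd b (Fin.last a) : Fin (a+1+b)) : ℕ) = a := by simp
    have hm := pfun_mid (rfl : a+1+b = a+1+b) σ τ
      (p := Fin.castAdd b (Fin.last a)) hval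
    rw [pbuild_apply, hm, hval]
  have hleft : ∀ x : Fin a,
      (if Q (((pbuild rfl σ τ (Fin.castAdd b x.castSucc) : Fin (a+1+b)) : ℕ) : ℤ)
        (((Fin.castAdd b x.castSucc : Fin (a+1+b)) : ℕ) : ℤ) then 1 else 0)
      = (if Q ((((σ x : ℕ) + b : ℕ)) : ℤ) (((x : ℕ) : ℕ) : ℤ) then 1 else 0) := by
    intro x
    have hval : ((Fin.castAdd b x.castSucc : Fin (a+1+b)) : ℕ) = (x : ℕ) := by simp
    have hp : ((Fin.castAdd b x.castSucc : Fin (a+1+b)) : ℕ) < a := by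
      rw [hval]; exact x.isLt
    have hl := pfun_left (rfl : a+1+b = a+1+b) σ τ (p := Fin.castAdd b x.castSucc) hp
    have harg : (⟨((Fin.castAdd b x.castSucc : Fin (a+1+b)) : ℕ), hp⟩ : Fin a) = x :=
      Fin.ext hval
    rw [pbuild_apply, hl, harg, hval]
  have hright : ∀ x : Fin b,
      (if Q (((pbuild rfl σ τ (Fin.natAdd (a+1) x) : Fin (a+1+b)) : ℕ) : ℤ)
        (((Fin.natAdd (a+1) x : Fin (a+1+b)) : ℕ) : ℤ) then 1 else 0)
      = (if Q (((τ x : ℕ)) : ℤ) (((a + 1 + (x : ℕ) : ℕ)) : ℤ) then 1 else 0) := by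
    intro x
    have hval : ((Fin.natAdd (a+1) x : Fin (a+1+b)) : ℕ) = a + 1 + (x : ℕ) := by simp
    have hp : a < ((Fin.natAdd (a+1) x : Fin (a+1+b)) : ℕ) := by rw [hval]; omega
    have hr := pfun_right (rfl : a+1+b = a+1+b) σ τ (p := Fin.natAdd (a+1) x) hp
    have harg : ∀ h' : ((Fin.natAdd (a+1) x : Fin (a+1+b)) : ℕ) - (a+1) < b,
        (⟨((Fin.natAdd (a+1) x : Fin (a+1+b)) : ℕ) - (a+1), h'⟩ : Fin b) = x :=
      fun h' => Fin.ext (by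
        show ((Fin.natAdd (a+1) x : Fin (a+1+b)) : ℕ) - (a+1) = (x : ℕ)
        rw [hval]; omega)
    rw [pbuild_apply, hr, harg, hval]
  rw [hmid, Finset.sum_congr rfl (fun x _ => hleft x),
    Finset.sum_congr rfl (fun x _ => hright x)]
  ring

lemma fpr_pbuild (hn : a + 1 + b = n) (σ : Equiv.Perm (Fin a)) (τ : Equiv.Perm (Fin b))
    (r : ℤ) :
    fpr r (pbuild hn σ τ)
      = (if r = (b : ℤ) then 1 else 0) + fpr (r - b) σ + fpr (r + a + 1) τ := by
  classical
  unfold fpr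
  have := card_filter_pbuild hn σ τ (fun v x => v = x + r)
  rw [this]
  congr 1
  · congr 1
    · by_cases hr : r = (b : ℤ)
      · rw [if_pos (by push_cast; omega), if_pos hr]
      · rw [if_neg (by push_cast; intro hcon; apply hr; omega), if_neg hr]
    · refine congrArg Finset.card (Finset.filter_congr ?_)
      intro x _
      push_cast
      constructor <;> intro h <;> omega
  · refine congrArg Finset.card (Finset.filter_congr ?_)
    intro x _
    push_cast
    constructor <;> intro h <;> omega

lemma exr_pbuild (hn : a + 1 + b = n) (σ : Equiv.Perm (Fin a)) (τ : Equiv.Perm (Fin b))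
    (r : ℤ) :
    exr r (pbuild hn σ τ)
      = (if r < (b : ℤ) then 1 else 0) + exr (r - b) σ + exr (r + a + 1) τ := by
  classical
  unfold exr
  have := card_filter_pbuild hn σ τ (fun v x => x + r < v)
  rw [this]
  congr 1
  · congr 1
    · by_cases hr : r < (b : ℤ)
      · rw [if_pos (by push_cast; omega), if_pos hr]
      · rw [if_neg (by push_cast; omega), if_neg hr]
    · refine congrArg Finset.card (Finset.filter_congr ?_)
      intro x _
      push_cast
      constructor <;> intro h <;> omega
  · refine congrArg Finset.card (Finset.filter_congr ?_)
    intro x _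
    push_cast
    constructor <;> intro h <;> omega

end Perm

end Aux10
namespace Aux10

lemma perm_decomp (n : ℕ) :
    ∃ E : (Σ m : Fin (n+1), {σ : Equiv.Perm (Fin (m : ℕ)) // Avoids132 σ} ×
        {τ : Equiv.Perm (Fin (n - (m : ℕ))) // Avoids132 τ}) ≃
        {π : Equiv.Perm (Fin (n+1)) // Avoids132 π},
      ∀ s, (E s).1 = pbuild (by have := s.1.isLt; omega) s.2.1.1 s.2.2.1 := by
  classical
  have hn : ∀ m : Fin (n+1), (m : ℕ) + 1 + (n - (m : ℕ)) = n + 1 :=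
    fun m => by have := m.isLt; omega
  set F : (Σ m : Fin (n+1), {σ : Equiv.Perm (Fin (m : ℕ)) // Avoids132 σ} ×
      {τ : Equiv.Perm (Fin (n - (m : ℕ))) // Avoids132 τ}) →
      {π : Equiv.Perm (Fin (n+1)) // Avoids132 π} :=
    fun s => ⟨pbuild (hn s.1) s.2.1.1 s.2.2.1,
      (avoids_pbuild (hn s.1) s.2.1.1 s.2.2.1).2 ⟨s.2.1.2, s.2.2.2⟩⟩ with hF
  have hmidval : ∀ (m : Fin (n+1)) (σ : Equiv.Perm (Fin (m:ℕ)))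
      (τ : Equiv.Perm (Fin (n - (m:ℕ)))) (p : Fin (n+1)), (p : ℕ) = (m : ℕ) →
      ((pbuild (hn m) σ τ) p : ℕ) = n := by
    intro m σ τ p hp
    rw [pbuild_apply, pfun_mid (hn m) σ τ hp]
    have := m.isLt; omega
  have hltval : ∀ (m : Fin (n+1)) (σ : Equiv.Perm (Fin (m:ℕ)))
      (τ : Equiv.Perm (Fin (n - (m:ℕ)))) (p : Fin (n+1)), (p : ℕ) ≠ (m : ℕ) →
      ((pbuild (hn m) σ τ) p : ℕ) < n := by
    intro m σ τ p hp
    rcases lt_or_gt_of_ne hp with h | h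
    · rw [pbuild_apply, pfun_left (hn m) σ τ h]
      have := (σ ⟨p, h⟩).isLt
      have := m.isLt
      omega
    · rw [pbuild_apply, pfun_right (hn m) σ τ h]
      have := (τ ⟨(p:ℕ) - ((m:ℕ)+1), by have := p.isLt; omega⟩).isLt
      omega
  have hinj : Function.Injective F := by
    rintro ⟨m1, ⟨σ1, hσ1⟩, ⟨τ1, hτ1⟩⟩ ⟨m2, ⟨σ2, hσ2⟩, ⟨τ2, hτ2⟩⟩ heq
    have hperm : pbuild (hn m1) σ1 τ1 = pbuild (hn m2) σ2 τ2 :=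
      congrArg Subtype.val heq
    have hm : m1 = m2 := by
      by_contra hne
      have hne' : (m1 : ℕ) ≠ (m2 : ℕ) := fun hc => hne (Fin.ext hc)
      have h1 : ((pbuild (hn m1) σ1 τ1) m1 : ℕ) = n := hmidval m1 σ1 τ1 m1 rfl
      have h2 : ((pbuild (hn m2) σ2 τ2) m1 : ℕ) < n := hltval m2 σ2 τ2 m1 hne'
      rw [hperm] at h1
      omega
    obtain rfl := hm
    have hσ : σ1 = σ2 := by
      apply Equiv.ext
      intro x
      have hx : (x : ℕ) < n + 1 := by have := x.isLt; have := m1.isLt; omega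
      have hvx : ((⟨(x:ℕ), hx⟩ : Fin (n+1)) : ℕ) < (m1 : ℕ) := x.isLt
      have e1 := pfun_left (hn m1) σ1 τ1 (p := ⟨(x:ℕ), hx⟩) hvx
      have e2 := pfun_left (hn m1) σ2 τ2 (p := ⟨(x:ℕ), hx⟩) hvx
      have hvals : ((pbuild (hn m1) σ1 τ1) ⟨(x:ℕ), hx⟩ : ℕ)
          = ((pbuild (hn m1) σ2 τ2) ⟨(x:ℕ), hx⟩ : ℕ) := by rw [hperm]
      rw [pbuild_apply, pbuild_apply, e1, e2] at hvals
      have harg : (⟨((⟨(x:ℕ), hx⟩ : Fin (n+1)) : ℕ), hvx⟩ : Fin (m1:ℕ)) = x := Fin.ext rfl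
      rw [harg] at hvals
      apply Fin.ext
      omega
    have hτ : τ1 = τ2 := by
      apply Equiv.ext
      intro x
      have hx : (m1:ℕ) + 1 + (x : ℕ) < n + 1 := by have := x.isLt; omega
      have hvx : (m1 : ℕ) < ((⟨(m1:ℕ) + 1 + (x:ℕ), hx⟩ : Fin (n+1)) : ℕ) := by
        show (m1:ℕ) < (m1:ℕ) + 1 + (x:ℕ); omega
      have e1 := pfun_right (hn m1) σ1 τ1 (p := ⟨(m1:ℕ) + 1 + (x:ℕ), hx⟩) hvx
      have e2 := pfun_right (hn m1) σ2 τ2 (p := ⟨(m1:ℕ) + 1 + (x:ℕ), hx⟩) hvx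
      have harg : ∀ h', (⟨((⟨(m1:ℕ) + 1 + (x:ℕ), hx⟩ : Fin (n+1)) : ℕ) - ((m1:ℕ) + 1), h'⟩
          : Fin (n - (m1:ℕ))) = x := by
        intro h'
        apply Fin.ext
        show ((⟨(m1:ℕ) + 1 + (x:ℕ), hx⟩ : Fin (n+1)) : ℕ) - ((m1:ℕ) + 1) = (x : ℕ)
        show (m1:ℕ) + 1 + (x:ℕ) - ((m1:ℕ) + 1) = (x : ℕ)
        omega
      rw [harg] at e1 e2
      have hvals : ((pbuild (hn m1) σ1 τ1) ⟨(m1:ℕ) + 1 + (x:ℕ), hx⟩ : ℕ)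
          = ((pbuild (hn m1) σ2 τ2) ⟨(m1:ℕ) + 1 + (x:ℕ), hx⟩ : ℕ) := by rw [hperm]
      rw [pbuild_apply, pbuild_apply, e1, e2] at hvals
      exact Fin.ext hvals
    obtain rfl := hσ
    obtain rfl := hτ
    simp
  have hsurj : Function.Surjective F := by
    rintro ⟨π, hπ⟩
    set M : Fin (n+1) := π.symm ⟨n, by omega⟩ with hM
    set a := (M : ℕ) with haa
    have haN : a ≤ n := by have := M.isLt; omega
    set b := n - a with hbb
    have hπM : π M = ⟨n, by omega⟩ := Equiv.apply_symm_apply π _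
    have hmax : ∀ p : Fin (n+1), p ≠ M → (π p : ℕ) < n := by
      intro p hp
      have h1 : π p ≠ ⟨n, by omega⟩ := fun hc => hp (π.injective (hc.trans hπM.symm))
      have h2 : (π p : ℕ) ≠ n := fun hc => h1 (Fin.ext hc)
      have := (π p).isLt
      omega
    have hcross : ∀ p k : Fin (n+1), (p:ℕ) < a → a < (k:ℕ) → (π k : ℕ) < (π p : ℕ) := by
      intro p k hp hk
      by_contra hc
      push_neg at hc
      have hpk : p ≠ k := fun hc2 => by rw [hc2] at hp; omega
      have hne : (π p : ℕ) ≠ (π k : ℕ) := fun hc2 => hpk (π.injective (Fin.ext hc2))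
      apply hπ
      refine ⟨p, M, k, Fin.lt_def.2 hp, Fin.lt_def.2 hk, Fin.lt_def.2 (by omega), ?_⟩
      have hkM : k ≠ M := fun hc2 => by rw [hc2] at hk; omega
      have := hmax k hkM
      rw [Fin.lt_def, hπM]
      exact this
    have keyR : ∀ k : Fin (n+1), a < (k:ℕ) → (π k : ℕ) < b := by
      intro k hk
      have himg : (Finset.Iic M).image π ⊆ Finset.Ioi (π k) := by
        intro y hy
        simp only [Finset.mem_image, Finset.mem_Iic, Finset.mem_Ioi] at hy ⊢
        obtain ⟨p, hp, rfl⟩ := hy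
        have hkM : k ≠ M := fun hc2 => by rw [hc2] at hk; omega
        rcases eq_or_lt_of_le hp with rfl | hplt
        · rw [Fin.lt_def, hπM]
          exact hmax k hkM
        · exact Fin.lt_def.2 (hcross p k (Fin.lt_def.1 hplt) hk)
      have hc := Finset.card_le_card himg
      rw [Finset.card_image_of_injective _ π.injective, Fin.card_Iic, Fin.card_Ioi] at hc
      have := (π k).isLt
      omega
    have keyL : ∀ p : Fin (n+1), (p:ℕ) < a → b ≤ (π p : ℕ) ∧ (π p : ℕ) < n := by
      intro p hp
      have h2 : (π p : ℕ) < n := hmax p (fun hc => by rw [hc] at hp; omega)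
      refine ⟨?_, h2⟩
      have himg : (Finset.Ioi M).image π ⊆ Finset.Iio (π p) := by
        intro y hy
        simp only [Finset.mem_image, Finset.mem_Ioi, Finset.mem_Iio] at hy ⊢
        obtain ⟨k, hk, rfl⟩ := hy
        exact Fin.lt_def.2 (hcross p k hp (Fin.lt_def.1 hk))
      have hc := Finset.card_le_card himg
      rw [Finset.card_image_of_injective _ π.injective, Fin.card_Ioi, Fin.card_Iio] at hc
      omega
    have posA : ∀ x : Fin a, (x : ℕ) < n + 1 := fun x => by have := x.isLt; omega
    have posB : ∀ q : Fin b, a + 1 + (q : ℕ) < n + 1 := fun q => by have := q.isLt; omega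
    set σ0 : Fin a → Fin a := fun x =>
      ⟨(π ⟨(x:ℕ), posA x⟩ : ℕ) - b, by
        have := keyL ⟨(x:ℕ), posA x⟩ x.isLt
        omega⟩ with hσ0
    set τ0 : Fin b → Fin b := fun q =>
      ⟨(π ⟨a + 1 + (q:ℕ), posB q⟩ : ℕ), keyR ⟨a + 1 + (q:ℕ), posB q⟩ (by
        show a < a + 1 + (q:ℕ); omega)⟩ with hτ0
    have hσinj : Function.Injective σ0 := by
      intro x y hxy
      have h1 := keyL ⟨(x:ℕ), posA x⟩ x.isLt
      have h2 := keyL ⟨(y:ℕ), posA y⟩ y.isLt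
      have h3 : ((σ0 x : ℕ)) = ((σ0 y : ℕ)) := by rw [hxy]
      simp only [hσ0] at h3
      have h4 : (π ⟨(x:ℕ), posA x⟩ : ℕ) = (π ⟨(y:ℕ), posA y⟩ : ℕ) := by omega
      have h5 := π.injective (Fin.ext h4)
      have h6 := congrArg Fin.val h5
      simp only at h6
      exact Fin.ext h6
    have hτinj : Function.Injective τ0 := by
      intro x y hxy
      have h3 : ((τ0 x : ℕ)) = ((τ0 y : ℕ)) := by rw [hxy]
      simp only [hτ0] at h3
      have h5 := π.injective (Fin.ext h3)
      have h6 := congrArg Fin.val h5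
      simp only at h6
      exact Fin.ext (by omega)
    set σ : Equiv.Perm (Fin a) :=
      Equiv.ofBijective σ0 (Finite.injective_iff_bijective.1 hσinj) with hσdef
    set τ : Equiv.Perm (Fin b) :=
      Equiv.ofBijective τ0 (Finite.injective_iff_bijective.1 hτinj) with hτdef
    have hpb : pbuild (hn M) σ τ = π := by
      apply Equiv.ext
      intro p
      apply Fin.ext
      rcases lt_trichotomy (p : ℕ) a with hp | hp | hp
      · rw [pbuild_apply, pfun_left (hn M) σ τ hp]
        show (σ0 ⟨(p:ℕ), hp⟩ : ℕ) + b = (π p : ℕ)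
        show (π ⟨((⟨(p:ℕ), hp⟩ : Fin a) : ℕ), posA ⟨(p:ℕ), hp⟩⟩ : ℕ) - b + b = (π p : ℕ)
        have hppos : (⟨((⟨(p:ℕ), hp⟩ : Fin a) : ℕ), posA ⟨(p:ℕ), hp⟩⟩ : Fin (n+1)) = p :=
          Fin.ext rfl
        rw [hppos]
        have := (keyL p hp).1
        omega
      · rw [pbuild_apply, pfun_mid (hn M) σ τ hp]
        have hpM : p = M := Fin.ext hp
        rw [hpM, hπM]
        show a + b = n
        omega
      · rw [pbuild_apply, pfun_right (hn M) σ τ hp]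
        show (τ0 ⟨(p:ℕ) - (a+1), by have := p.isLt; omega⟩ : ℕ) = (π p : ℕ)
        show (π ⟨a + 1 + ((⟨(p:ℕ) - (a+1), by have := p.isLt; omega⟩ : Fin b) : ℕ),
          posB ⟨(p:ℕ) - (a+1), by have := p.isLt; omega⟩⟩ : ℕ) = (π p : ℕ)
        have hppos : (⟨a + 1 + ((⟨(p:ℕ) - (a+1), by have := p.isLt; omega⟩ : Fin b) : ℕ),
            posB ⟨(p:ℕ) - (a+1), by have := p.isLt; omega⟩⟩ : Fin (n+1)) = p := by
          apply Fin.ext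
          show a + 1 + ((p:ℕ) - (a+1)) = (p:ℕ)
          omega
        rw [hppos]
    have havs := (avoids_pbuild (hn M) σ τ).1 (by rw [hpb]; exact hπ)
    exact ⟨⟨M, ⟨σ, havs.1⟩, ⟨τ, havs.2⟩⟩, Subtype.ext hpb⟩
  exact ⟨Equiv.ofBijective F ⟨hinj, hsurj⟩, fun s => rfl⟩

end Aux10
namespace Aux10

lemma dbuild_cancel_aux {A B A' B' : List Bool} (hA : IsDyck A) (hA' : IsDyck A')
    (hle : A.length ≤ A'.length) (h : A ++ false :: B = A' ++ false :: B') : A = A' := by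
  have htA : (A ++ false :: B).take A.length = A := by
    rw [take_append_left _ _ le_rfl, List.take_length]
  have htA' : (A' ++ false :: B').take A.length = A'.take A.length :=
    take_append_left _ _ hle
  have hAA' : A = A'.take A.length := by
    conv_lhs => rw [← htA]
    rw [h, htA']
  rcases eq_or_lt_of_le hle with heq | hlt
  · rw [heq, List.take_length] at hAA'
    exact hAA' 
  · exfalso
    have hg : A'.getD A.length false = false := by
      have g1 : (A ++ false :: B).getD A.length false = false := by
        rw [List.getD_append_right _ _ _ _ le_rfl]
        simp
      rw [h, List.getD_append _ _ _ _ hlt] at g1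
      exact g1
    have hb := bal_take_succ A' A.length hlt
    rw [if_neg (by rw [hg]; exact Bool.false_ne_true), ← hAA'] at hb
    have h1 := bal_take_nonneg hA' (A.length + 1)
    have h2 := bal_eq_zero hA
    omega

lemma dbuild_inj {A B A' B' : List Bool} (hA : IsDyck A) (hA' : IsDyck A')
    (h : dbuild A B = dbuild A' B') : A = A' ∧ B = B' := by
  have h2 : A ++ false :: B = A' ++ false :: B' := by
    simpa [dbuild] using h
  have hAA : A = A' := by
    rcases le_total A.length A'.length with hle | hle
    · exact dbuild_cancel_aux hA hA' hle h2
    · exact (dbuild_cancel_aux hA' hA hle h2.symm).symm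
  subst hAA
  have h3 := List.append_cancel_left h2
  exact ⟨rfl, by injection h3⟩

lemma dyck_decomp (n : ℕ) :
    ∃ E : (Σ m : Fin (n+1), {A : List Bool // A.length = 2*(m : ℕ) ∧ IsDyck A} ×
        {B : List Bool // B.length = 2*(n - (m : ℕ)) ∧ IsDyck B}) ≃
        {w : List Bool // w.length = 2*(n+1) ∧ IsDyck w},
      ∀ s, (E s).1 = dbuild s.2.1.1 s.2.2.1 := by
  classical
  set F : (Σ m : Fin (n+1), {A : List Bool // A.length = 2*(m : ℕ) ∧ IsDyck A} ×
      {B : List Bool // B.length = 2*(n - (m : ℕ)) ∧ IsDyck B}) →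
      {w : List Bool // w.length = 2*(n+1) ∧ IsDyck w} :=
    fun s => ⟨dbuild s.2.1.1 s.2.2.1, by
      rw [dbuild_length, s.2.1.2.1, s.2.2.2.1]
      have := s.1.isLt
      omega, isDyck_dbuild s.2.1.2.2 s.2.2.2.2⟩ with hFdef
  have hinj : Function.Injective F := by
    rintro ⟨m1, ⟨A1, hl1, hd1⟩, ⟨B1, hl1', hd1'⟩⟩ ⟨m2, ⟨A2, hl2, hd2⟩, ⟨B2, hl2', hd2'⟩⟩ heq
    have h0 : dbuild A1 B1 = dbuild A2 B2 := congrArg Subtype.val heq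
    obtain ⟨hAA, hBB⟩ := dbuild_inj hd1 hd2 h0
    have hm : m1 = m2 := by
      apply Fin.ext
      have : A1.length = A2.length := by rw [hAA]
      omega
    subst hm
    subst hAA
    subst hBB
    simp
  have hsurj : Function.Surjective F := by
    rintro ⟨w, hlen, hw⟩
    have hne : w ≠ [] := by
      intro hc
      rw [hc] at hlen
      simp at hlen
    obtain ⟨A, B, hA, hB, hdec⟩ := exists_decomp hw hne
    obtain ⟨a, hAlen⟩ := length_even hA
    have hwl : w.length = A.length + B.length + 2 := by rw [hdec, dbuild_length]
    have haN : a ≤ n := by omega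
    have hBlen : B.length = 2 * (n - a) := by omega
    refine ⟨⟨⟨a, by omega⟩, ⟨⟨A, hAlen, hA⟩, ⟨B, hBlen, hB⟩⟩⟩, ?_⟩
    exact Subtype.ext hdec.symm
  exact ⟨Equiv.ofBijective F ⟨hinj, hsurj⟩, fun s => rfl⟩

end Aux10
namespace Aux10

lemma master (n : ℕ) :
    ∃ Φ : {π : Equiv.Perm (Fin n) // Avoids132 π} ≃
        {w : List Bool // w.length = 2*n ∧ IsDyck w},
      ∀ (π : {π : Equiv.Perm (Fin n) // Avoids132 π}) (r : ℤ),
        fpr r π.1 = ctr r (Φ π).1 ∧ exr r π.1 = ltr r (Φ π).1 := by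
  induction n using Nat.strong_induction_on with
  | _ n ih =>
    match n with
    | 0 =>
      have hd : IsDyck ([] : List Bool) := ⟨rfl, fun k hk => by simp at hk⟩
      have hav : Avoids132 (Equiv.refl (Fin 0)) := by
        rintro ⟨i, -, -, -⟩
        exact i.elim0
      refine ⟨{ toFun := fun _ => ⟨[], by simp, hd⟩
                invFun := fun _ => ⟨Equiv.refl _, hav⟩
                left_inv := fun x => Subtype.ext (by
                  apply Equiv.ext
                  intro i
                  exact i.elim0)
                right_inv := fun y => Subtype.ext
                  (List.length_eq_zero_iff.1 (by simpa using y.2.1)).symm }, ?_⟩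
      intro π r
      exact ⟨by rw [fpr_nil]; exact (ctr_nil r).symm,
        by rw [exr_nil]; exact (ltr_nil r).symm⟩
    | (k+1) =>
      obtain ⟨EP, hEP⟩ := perm_decomp k
      obtain ⟨ED, hED⟩ := dyck_decomp k
      have IH1 : ∀ m : Fin (k+1),
          ∃ Φ : {σ : Equiv.Perm (Fin (m:ℕ)) // Avoids132 σ} ≃
              {w : List Bool // w.length = 2*(m:ℕ) ∧ IsDyck w},
            ∀ σ r, fpr r σ.1 = ctr r (Φ σ).1 ∧ exr r σ.1 = ltr r (Φ σ).1 :=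
        fun m => ih (m:ℕ) (by have := m.isLt; omega)
      have IH2 : ∀ m : Fin (k+1),
          ∃ Φ : {τ : Equiv.Perm (Fin (k - (m:ℕ))) // Avoids132 τ} ≃
              {w : List Bool // w.length = 2*(k - (m:ℕ)) ∧ IsDyck w},
            ∀ τ r, fpr r τ.1 = ctr r (Φ τ).1 ∧ exr r τ.1 = ltr r (Φ τ).1 :=
        fun m => ih (k - (m:ℕ)) (by omega)
      choose Φ1 hΦ1 using IH1
      choose Φ2 hΦ2 using IH2
      set Ψ := Equiv.sigmaCongrRight
        (fun m : Fin (k+1) => Equiv.prodCongr (Φ1 m) (Φ2 m)) with hΨ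
      refine ⟨EP.symm.trans (Ψ.trans ED), ?_⟩
      intro π r
      rcases hs : EP.symm π with ⟨m, ⟨σ, hσ⟩, ⟨τ, hτ⟩⟩
      have hπ1 : π.1 = pbuild (by have := m.isLt; omega :
          (m:ℕ) + 1 + (k - (m:ℕ)) = k + 1) σ τ := by
        have h1 : EP (EP.symm π) = π := EP.apply_symm_apply π
        have h2 := hEP (EP.symm π)
        rw [h1, hs] at h2
        exact h2
      have hw : ((EP.symm.trans (Ψ.trans ED)) π).1
          = dbuild (Φ1 m ⟨σ, hσ⟩).1 (Φ2 m ⟨τ, hτ⟩).1 := by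
        show (ED (Ψ (EP.symm π))).1 = _
        rw [hs]
        exact hED (Ψ ⟨m, ⟨σ, hσ⟩, ⟨τ, hτ⟩⟩)
      have e1 : fpr (r - ((k - (m:ℕ) : ℕ) : ℤ)) σ
          = ctr (r - ((k - (m:ℕ) : ℕ) : ℤ)) (Φ1 m ⟨σ, hσ⟩).1 :=
        (hΦ1 m ⟨σ, hσ⟩ _).1
      have e2 : fpr (r + ((m:ℕ) : ℤ) + 1) τ
          = ctr (r + ((m:ℕ) : ℤ) + 1) (Φ2 m ⟨τ, hτ⟩).1 :=
        (hΦ2 m ⟨τ, hτ⟩ _).1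
      have e3 : exr (r - ((k - (m:ℕ) : ℕ) : ℤ)) σ
          = ltr (r - ((k - (m:ℕ) : ℕ) : ℤ)) (Φ1 m ⟨σ, hσ⟩).1 :=
        (hΦ1 m ⟨σ, hσ⟩ _).2
      have e4 : exr (r + ((m:ℕ) : ℤ) + 1) τ
          = ltr (r + ((m:ℕ) : ℤ) + 1) (Φ2 m ⟨τ, hτ⟩).1 :=
        (hΦ2 m ⟨τ, hτ⟩ _).2
      constructor
      · rw [hπ1, fpr_pbuild, hw,
          ctr_dbuild _ _ (Φ1 m ⟨σ, hσ⟩).2.2 (Φ2 m ⟨τ, hτ⟩).2.2 (m:ℕ) (k - (m:ℕ))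
            (Φ1 m ⟨σ, hσ⟩).2.1 (Φ2 m ⟨τ, hτ⟩).2.1 r, e1, e2]
      · rw [hπ1, exr_pbuild, hw,
          ltr_dbuild _ _ (Φ1 m ⟨σ, hσ⟩).2.2 (Φ2 m ⟨τ, hτ⟩).2.2 (m:ℕ) (k - (m:ℕ))
            (Φ1 m ⟨σ, hσ⟩).2.1 (Φ2 m ⟨τ, hτ⟩).2.1 r, e3, e4]

end Aux10

/-- The number of 132-avoiding permutations of length `n` with `i` fixed points and `j`
excedances equals the number of Dyck paths of semilength `n` with `i` centered tunnels
and `j` left tunnels. -/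
theorem stmt10 (n i j : ℕ) :
    Nat.card {π : Equiv.Perm (Fin n) // Avoids132 π ∧ fpCount π = i ∧ excCount π = j} =
    Nat.card {w : List Bool // w.length = 2 * n ∧ IsDyck w ∧
        ctCount w = i ∧ ltCount w = j} := by
  classical
  obtain ⟨Φ, hΦ⟩ := Aux10.master n
  have e2 : {x : {π : Equiv.Perm (Fin n) // Avoids132 π} //
        fpCount x.1 = i ∧ excCount x.1 = j} ≃
      {y : {w : List Bool // w.length = 2*n ∧ IsDyck w} //
        ctCount y.1 = i ∧ ltCount y.1 = j} :=
    Φ.subtypeEquiv (by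
      intro x
      rw [Aux10.fpCount_eq, Aux10.excCount_eq, (hΦ x 0).1, (hΦ x 0).2]
      exact Iff.rfl)
  exact Nat.card_congr
    (((Equiv.subtypeSubtypeEquivSubtypeInter Avoids132
        (fun π => fpCount π = i ∧ excCount π = j)).symm.trans e2).trans
      ((Equiv.subtypeSubtypeEquivSubtypeInter (fun w : List Bool => w.length = 2*n ∧ IsDyck w)
        (fun w => ctCount w = i ∧ ltCount w = j)).trans
      (Equiv.subtypeEquivRight (fun w => by tauto))))
end

section
/- For n ≥ 1, h_n(x) = C_n + Σ_{m=0}^{n-1} (x-1) C_m h_{n-1-m}(x), where h_n(x) = Σ_D x^{h(D)} over Dyck paths D of semilength n, h(D) is the number of hills of D, and C_m is the m-th Catalan number. -/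
/-- Number of Dyck paths of semilength `n` with exactly `i` hills. -/
noncomputable def hillCount (n i : ℕ) : ℕ :=
  Nat.card {w : List Bool // w.length = 2 * n ∧ IsDyck w ∧ numHills w = i}

/-- The polynomial `h_n(x) = Σ_D x^{h(D)}` over Dyck paths `D` of semilength `n`. -/
noncomputable def hpoly (n : ℕ) : Polynomial ℤ :=
  ∑ i ∈ Finset.range (n + 1), (hillCount n i : Polynomial ℤ) * Polynomial.X ^ i


section Aux
open List Finset Polynomial


lemma count_add_count (w : List Bool) : w.count true + w.count false = w.length := by
  induction w with
  | nil => simp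
  | cons b t ih => cases b <;> simp [ih] <;> omega

lemma dyck_take {w : List Bool} (h : IsDyck w) (k : ℕ) :
    (w.take k).count false ≤ (w.take k).count true := by
  rcases lt_or_ge k w.length with hk | hk
  · exact h.2 k hk
  · rw [List.take_of_length_le hk]; exact le_of_eq h.1.symm

lemma head_true {a : Bool} {t : List Bool} (h : IsDyck (a :: t)) : a = true := by
  by_contra ha
  have ha' : a = false := by cases a <;> simp_all
  subst ha'
  rcases Nat.lt_or_ge 1 (false :: t).length with h1 | h1
  · have := h.2 1 h1
    simp at this
  · have ht : t = [] := by
      simp only [List.length_cons] at h1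
      exact List.length_eq_zero_iff.mp (by omega)
    subst ht
    have := h.1
    simp at this

lemma take_enc_low {A B : List Bool} {k : ℕ} (h1 : k ≤ A.length) :
    (true :: A ++ false :: B).take (k+1) = true :: A.take k := by
  rw [List.cons_append, List.take_succ_cons, List.take_append,
    Nat.sub_eq_zero_of_le h1, List.take_zero, List.append_nil]

lemma take_enc_high {A B : List Bool} (j : ℕ) :
    (true :: A ++ false :: B).take (A.length + 2 + j) = true :: A ++ false :: B.take j := by
  have h2 : A.length + 2 + j = (A.length + 1 + j) + 1 := by omega
  rw [h2, List.cons_append, List.take_succ_cons, List.take_append,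
    List.take_of_length_le (by omega)]
  have h3 : A.length + 1 + j - A.length = j + 1 := by omega
  rw [h3, List.take_succ_cons, List.cons_append]

lemma getD_enc_high {A B : List Bool} (j : ℕ) (d : Bool) :
    (true :: A ++ false :: B).getD (A.length + 2 + j) d = B.getD j d := by
  have h : true :: A ++ false :: B = (true :: A ++ [false]) ++ B := by simp
  rw [h, List.getD_append_right _ _ _ _ (by simp)]
  congr 1
  simp

lemma isDyck_enc {A B : List Bool} (hA : IsDyck A) (hB : IsDyck B) :
    IsDyck (true :: A ++ false :: B) := by
  constructor
  · have := hA.1; have := hB.1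
    simp [List.count_append, List.count_cons]
    omega
  · intro k hk
    have hlen : (true :: A ++ false :: B).length = A.length + 2 + B.length := by
      simp; omega
    by_cases hk1 : k ≤ A.length + 1
    · cases k with
      | zero => simp
      | succ k' =>
        rw [take_enc_low (by omega)]
        have := dyck_take hA k'
        simp [List.count_cons]
        omega
    · have hj : k = A.length + 2 + (k - A.length - 2) := by omega
      rw [hj, take_enc_high]
      have := dyck_take hB (k - A.length - 2)
      have := hA.1
      simp [List.count_append, List.count_cons]
      omega


lemma numHills_enc {A B : List Bool} (hA : IsDyck A) :
    numHills (true :: A ++ false :: B) = (if A = [] then 1 else 0) + numHills B := by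
  have hlen : (true :: A ++ false :: B).length = (A.length + 2) + B.length := by
    simp; omega
  unfold numHills
  rw [hlen, List.range_add, List.filter_append, List.length_append, List.filter_map,
    List.length_map]
  congr 1
  · -- first block: contributes 1 iff A = []
    by_cases hA0 : A = []
    · subst hA0
      rw [if_pos rfl]
      rw [show List.range ([].length + 2) = [0, 1] from by decide]
      rw [List.filter_cons, List.filter_cons, List.filter_nil]
      norm_num
      rw [if_pos (by omega)]
      rfl
    · rw [if_neg hA0]
      have hnil : (List.range (A.length + 2)).filter
          (fun i => decide (i+1 < (A.length + 2) + B.length ∧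
            (true :: A ++ false :: B).getD i false = true ∧
            (true :: A ++ false :: B).getD (i+1) true = false ∧
            ((true :: A ++ false :: B).take i).count true
              = ((true :: A ++ false :: B).take i).count false)) = [] := by
        rw [List.filter_eq_nil_iff]
        intro i hi
        simp only [List.mem_range] at hi
        simp only [decide_eq_true_eq, not_and]
        intro h1 h2 h3
        cases i with
        | zero =>
          exfalso
          obtain ⟨a, t, rfl⟩ : ∃ a t, A = a :: t := by
            cases A with
            | nil => simp at hA0
            | cons a t => exact ⟨a, t, rfl⟩
          have ha := head_true hA
          subst ha
          simp at h3
        | succ k =>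
          rw [take_enc_low (by omega)]
          have := dyck_take hA k
          simp [List.count_cons]
          omega
      rw [hnil]
      rfl
  · -- second block equals numHills B
    refine congrArg List.length (List.filter_congr ?_)
    intro j hj
    simp only [List.mem_range] at hj
    simp only [Function.comp_apply, decide_eq_decide]
    rw [getD_enc_high, show A.length + 2 + j + 1 = A.length + 2 + (j+1) from by omega,
      getD_enc_high, take_enc_high]
    have hA1 := hA.1
    constructor
    · rintro ⟨h1, h2, h3, h4⟩
      refine ⟨by omega, h2, h3, ?_⟩
      simp [List.count_append, List.count_cons] at h4
      omega
    · rintro ⟨h1, h2, h3, h4⟩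
      refine ⟨by omega, h2, h3, ?_⟩
      simp [List.count_append, List.count_cons]
      omega

lemma enc_inj_aux {A A' B B' : List Bool} (hA : IsDyck A) (hA' : IsDyck A')
    (h : A ++ false :: B = A' ++ false :: B') (hlt : A.length < A'.length) : False := by
  have htake := congrArg (List.take (A.length + 1)) h
  rw [List.take_append, List.take_append,
    List.take_of_length_le (by omega),
    show A.length + 1 - A.length = 1 from by omega,
    Nat.sub_eq_zero_of_le (by omega), List.take_zero, List.append_nil,
    show (false :: B).take 1 = [false] from rfl] at htake
  -- htake : A ++ [false] = A'.take (A.length+1)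
  have hc := dyck_take hA' (A.length + 1)
  rw [← htake] at hc
  have := hA.1
  simp [List.count_append] at hc
  omega

lemma enc_inj {A A' B B' : List Bool} (hA : IsDyck A) (hA' : IsDyck A')
    (h : true :: A ++ false :: B = true :: A' ++ false :: B') : A = A' ∧ B = B' := by
  have h' : A ++ false :: B = A' ++ false :: B' := by simpa using h
  rcases lt_trichotomy A.length A'.length with hl | hl | hl
  · exact absurd (enc_inj_aux hA hA' h' hl) (by simp)
  · obtain ⟨h1, h2⟩ := List.append_inj h' hl
    exact ⟨h1, by simpa using h2⟩
  · exact absurd (enc_inj_aux hA' hA h'.symm hl) (by simp)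

lemma dyck_decomp {w : List Bool} (hw : IsDyck w) (hne : w ≠ []) :
    ∃ A B, IsDyck A ∧ IsDyck B ∧ w = true :: A ++ false :: B := by
  have hex : ∃ k, 0 < k ∧ (w.take k).count true = (w.take k).count false := by
    refine ⟨w.length, List.length_pos_iff.mpr hne, ?_⟩
    rw [List.take_length]; exact hw.1
  have hkpos : 0 < Nat.find hex := (Nat.find_spec hex).1
  have hkbal : (w.take (Nat.find hex)).count true = (w.take (Nat.find hex)).count false :=
    (Nat.find_spec hex).2
  have hmin : ∀ j, j < Nat.find hex →
      ¬(0 < j ∧ (w.take j).count true = (w.take j).count false) :=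
    fun j hj => Nat.find_min hex hj
  have hkle : Nat.find hex ≤ w.length := Nat.find_min' hex ⟨List.length_pos_iff.mpr hne, by
    rw [List.take_length]; exact hw.1⟩
  obtain ⟨k, hgen⟩ : ∃ k, Nat.find hex = k := ⟨_, rfl⟩
  rw [hgen] at hkpos hkbal hkle
  simp only [hgen] at hmin
  have hlen1 : 1 ≤ w.length := List.length_pos_iff.mpr hne
  have hk2 : 2 ≤ k := by
    by_contra h2
    have hk1 : k = 1 := by omega
    rw [hk1] at hkbal
    have h3 : (w.take 1).length = 1 := by rw [List.length_take]; omega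
    have := count_add_count (w.take 1)
    omega
  obtain ⟨a, t, rfl⟩ : ∃ a t, w = a :: t := by
    cases w with
    | nil => simp at hne
    | cons a t => exact ⟨a, t, rfl⟩
  have ha := head_true hw
  subst ha
  set A := t.take (k - 2) with hA
  have hkt : k - 1 ≤ t.length := by simp at hkle; omega
  have hAL : A.length = k - 2 := by rw [hA, List.length_take]; omega
  have htk1 : (true :: t).take (k - 1) = true :: A := by
    rw [show k - 1 = (k-2) + 1 from by omega, List.take_succ_cons]
  have hlt2 : k - 2 < t.length := by omega
  obtain ⟨x, hx⟩ : ∃ x, t[k-2]? = some x := ⟨t[k-2], List.getElem?_eq_getElem hlt2⟩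
  have htk : (true :: t).take k = true :: (A ++ [x]) := by
    rw [show k = (k-2+1) + 1 from by omega, List.take_succ, List.getElem?_cons_succ, hx,
      show k-2+1 = k-1 from by omega, htk1]
    simp
  have hpre : ((true::t).take (k-1)).count false ≤ ((true::t).take (k-1)).count true :=
    dyck_take hw (k-1)
  have hbal1 : ¬((true :: t).take (k-1)).count true = ((true :: t).take (k-1)).count false := by
    intro hcon
    exact hmin (k-1) (by omega) ⟨by omega, hcon⟩
  rw [htk1] at hbal1 hpre
  rw [htk] at hkbal
  have hxf : x = false ∧ A.count true = A.count false := by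
    cases x
    · refine ⟨rfl, ?_⟩
      simp [List.count_append, List.count_cons] at hkbal hbal1 hpre ⊢
      omega
    · exfalso
      simp [List.count_append, List.count_cons] at hkbal hbal1 hpre
      omega
  obtain ⟨hxf, hAbal⟩ := hxf
  subst hxf
  set B := t.drop (k-1) with hB
  have hsplit : true :: t = true :: A ++ false :: B := by
    conv_lhs => rw [← List.take_append_drop k (true :: t)]
    rw [htk, show (true::t).drop k = t.drop (k-1) from by
      rw [show k = (k-1)+1 from by omega, List.drop_succ_cons]
      congr 1]
    simp
    exact hB.symm
  refine ⟨A, B, ⟨hAbal, ?_⟩, ⟨?_, ?_⟩, hsplit⟩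
  · -- A prefix condition
    intro j hj
    rw [hAL] at hj
    have hAj : A.take j = t.take j := by
      rw [hA, List.take_take, min_eq_left (by omega)]
    have h1 : (true::t).take (j+1) = true :: t.take j := List.take_succ_cons
    have hdy := dyck_take hw (j+1)
    rw [h1] at hdy
    have hnb : ¬ (true :: t.take j).count true = (true :: t.take j).count false := by
      intro hc
      exact hmin (j+1) (by omega) ⟨by omega, by rw [h1]; exact hc⟩
    rw [hAj]
    simp [List.count_cons] at hdy hnb ⊢
    omega
  · -- B balance
    have hbal := hw.1
    rw [hsplit] at hbal
    simp [List.count_append, List.count_cons] at hbal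
    omega
  · -- B prefix
    intro j hj
    have h1 : (true::t).take (A.length + 2 + j) = true :: A ++ false :: B.take j := by
      rw [hsplit, take_enc_high]
    have hdy := dyck_take hw (A.length + 2 + j)
    rw [h1] at hdy
    simp [List.count_append, List.count_cons] at hdy
    omega



def blists : ℕ → Finset (List Bool)
  | 0 => {[]}
  | n+1 => (blists n).biUnion (fun w => {true :: w, false :: w})

lemma mem_blists {w : List Bool} {n : ℕ} : w ∈ blists n ↔ w.length = n := by
  induction n generalizing w with
  | zero => simp [blists, List.length_eq_zero_iff]
  | succ n ih =>
    simp only [blists, Finset.mem_biUnion, Finset.mem_insert, Finset.mem_singleton]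
    constructor
    · rintro ⟨a, ha, rfl | rfl⟩ <;> simp [ih.mp ha]
    · intro h
      cases w with
      | nil => simp at h
      | cons b t =>
        refine ⟨t, ih.mpr (by simpa using h), ?_⟩
        cases b <;> simp

def dys (n : ℕ) : Finset (List Bool) := (blists (2*n)).filter IsDyck

lemma mem_dys {w : List Bool} {n : ℕ} : w ∈ dys n ↔ w.length = 2*n ∧ IsDyck w := by
  simp [dys, mem_blists]

lemma dys_zero : dys 0 = {[]} := by
  ext w
  simp only [mem_dys, Finset.mem_singleton]
  constructor
  · rintro ⟨h, -⟩; exact List.length_eq_zero_iff.mp (by simpa using h)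
  · rintro rfl; exact ⟨rfl, ⟨rfl, by simp⟩⟩

lemma hillCount_eq (n i : ℕ) :
    hillCount n i = ((dys n).filter (fun w => numHills w = i)).card := by
  rw [hillCount, ← Nat.card_eq_finsetCard]
  exact Nat.card_congr (Equiv.subtypeEquivRight (by intro w; simp [mem_dys, and_assoc]))

lemma count_true_eq (w : List Bool) :
    ((List.range w.length).filter (fun i => w.getD i false = true)).length = w.count true := by
  induction w with
  | nil => simp
  | cons b t ih =>
    rw [List.length_cons, List.range_succ_eq_map, List.filter_cons, List.filter_map]
    cases b <;> simp_all [Function.comp_def]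

lemma numHills_le (w : List Bool) : numHills w ≤ w.count true := by
  rw [numHills, ← count_true_eq]
  refine List.Sublist.length_le (List.monotone_filter_right _ ?_)
  intro a h
  simp only [decide_eq_true_eq] at h ⊢
  tauto

lemma count_true_of_dys {w : List Bool} {n : ℕ} (h : w ∈ dys n) : w.count true = n := by
  rw [mem_dys] at h
  have := count_add_count w
  have := h.2.1
  omega

lemma hpoly_sum (n : ℕ) : hpoly n = ∑ w ∈ dys n, (X : Polynomial ℤ) ^ numHills w := by
  rw [hpoly, ← Finset.sum_fiberwise_of_maps_to
    (g := numHills) (t := Finset.range (n+1)) (s := dys n)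
    (fun w hw => Finset.mem_range.mpr (by
      have := numHills_le w
      have := count_true_of_dys hw
      omega)) (fun w => (X : Polynomial ℤ) ^ numHills w)]
  refine Finset.sum_congr rfl (fun i _ => ?_)
  rw [Finset.sum_congr rfl (fun w hw => by rw [(Finset.mem_filter.mp hw).2]),
    Finset.sum_const, hillCount_eq, nsmul_eq_mul]

lemma length_even_of_dyck {A : List Bool} (hA : IsDyck A) : A.length = 2 * A.count true := by
  have := count_add_count A
  have := hA.1
  omega

lemma sum_dys_succ {M : Type*} [AddCommMonoid M] (n : ℕ) (f : List Bool → M) :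
    ∑ w ∈ dys (n+1), f w
      = ∑ m ∈ Finset.range (n+1), ∑ p ∈ dys m ×ˢ dys (n-m),
          f (true :: p.1 ++ false :: p.2) := by
  rw [Finset.sum_sigma' (Finset.range (n+1)) (fun m => dys m ×ˢ dys (n-m))
    (fun _ p => f (true :: p.1 ++ false :: p.2))]
  refine (Finset.sum_bij (fun x _ => true :: x.2.1 ++ false :: x.2.2) ?_ ?_ ?_ ?_).symm
  · rintro ⟨m, A, B⟩ hx
    rw [Finset.mem_sigma, Finset.mem_product] at hx
    obtain ⟨hm, hA, hB⟩ := hx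
    rw [Finset.mem_range] at hm
    rw [mem_dys] at hA hB ⊢
    dsimp only at hm hA hB
    obtain ⟨hAl, hAd⟩ := hA
    obtain ⟨hBl, hBd⟩ := hB
    refine ⟨?_, isDyck_enc hAd hBd⟩
    simp [hAl, hBl]
    omega
  · rintro ⟨m₁, A₁, B₁⟩ h₁ ⟨m₂, A₂, B₂⟩ h₂ heq
    rw [Finset.mem_sigma, Finset.mem_product] at h₁ h₂
    obtain ⟨-, hA₁, -⟩ := h₁
    obtain ⟨-, hA₂, -⟩ := h₂
    dsimp only at hA₁ hA₂
    rw [mem_dys] at hA₁ hA₂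
    obtain ⟨hAB, hBB⟩ := enc_inj hA₁.2 hA₂.2 heq
    have : m₁ = m₂ := by
      have := hA₁.1; have := hA₂.1
      rw [hAB] at *
      omega
    subst this; subst hAB; subst hBB; rfl
  · intro w hw
    rw [mem_dys] at hw
    obtain ⟨hwl, hwd⟩ := hw
    have hne : w ≠ [] := by
      intro h; subst h; simp at hwl
    obtain ⟨A, B, hAd, hBd, rfl⟩ := dyck_decomp hwd hne
    have hAl := length_even_of_dyck hAd
    have hBl := length_even_of_dyck hBd
    have hlen : A.length + B.length + 2 = 2 * (n + 1) := by
      simp at hwl; omega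
    refine ⟨⟨A.count true, A, B⟩, ?_, rfl⟩
    rw [Finset.mem_sigma, Finset.mem_product, Finset.mem_range, mem_dys, mem_dys]
    dsimp only
    exact ⟨by omega, ⟨by omega, hAd⟩, ⟨by omega, hBd⟩⟩
  · intros; rfl

lemma card_dys (n : ℕ) : (dys n).card = catalan n := by
  induction n using Nat.strong_induction_on with
  | _ n ih =>
    match n with
    | 0 => simp [dys_zero]
    | Nat.succ k =>
      have h1 : (dys (k+1)).card
          = ∑ m ∈ Finset.range (k+1), (dys m).card * (dys (k-m)).card := by
        rw [Finset.card_eq_sum_ones, sum_dys_succ k (fun _ => 1)]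
        refine Finset.sum_congr rfl fun m _ => ?_
        rw [Finset.sum_const, smul_eq_mul, mul_one, Finset.card_product]
      rw [h1, catalan_succ, ← Fin.sum_univ_eq_sum_range
        (fun m => (dys m).card * (dys (k-m)).card) (k+1)]
      refine Finset.sum_congr rfl fun i _ => ?_
      rw [ih i i.2, ih (k - i) (by omega)]

lemma hpoly_zero : hpoly 0 = 1 := by
  rw [hpoly_sum, dys_zero]
  simp [numHills]

lemma sum_ite_empty (m : ℕ) :
    ∑ A ∈ dys m, (if A = [] then (Polynomial.X : Polynomial ℤ) else 1)
      = (catalan m : Polynomial ℤ) + if m = 0 then Polynomial.X - 1 else 0 := by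
  cases m with
  | zero =>
    rw [dys_zero]
    simp
  | succ m =>
    rw [Finset.sum_congr rfl (fun A hA => if_neg (by
      intro h
      subst h
      have := (mem_dys.mp hA).1
      simp at this))]
    simp [card_dys]

lemma hpoly_rec (n : ℕ) :
    hpoly (n+1) = (Polynomial.X - 1) * hpoly n
      + ∑ m ∈ Finset.range (n+1), (catalan m : Polynomial ℤ) * hpoly (n - m) := by
  rw [hpoly_sum, sum_dys_succ]
  have h1 : ∀ m ∈ Finset.range (n+1),
      ∑ p ∈ dys m ×ˢ dys (n-m),
          (Polynomial.X : Polynomial ℤ) ^ numHills (true :: p.1 ++ false :: p.2)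
      = ((catalan m : Polynomial ℤ) + if m = 0 then Polynomial.X - 1 else 0)
          * hpoly (n - m) := by
    intro m hm
    rw [Finset.sum_product]
    have h2 : ∀ A ∈ dys m, ∑ B ∈ dys (n-m),
        (Polynomial.X : Polynomial ℤ) ^ numHills (true :: A ++ false :: B)
        = (if A = [] then (Polynomial.X : Polynomial ℤ) else 1) * hpoly (n - m) := by
      intro A hA
      rw [hpoly_sum, Finset.mul_sum]
      refine Finset.sum_congr rfl fun B hB => ?_
      rw [numHills_enc (mem_dys.mp hA).2, pow_add]
      congr 1
      by_cases h : A = [] <;> simp [h]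
    rw [Finset.sum_congr rfl h2, ← Finset.sum_mul, sum_ite_empty]
  rw [Finset.sum_congr rfl h1]
  simp only [add_mul]
  rw [Finset.sum_add_distrib, add_comm]
  congr 1
  rw [Finset.sum_eq_single 0 (fun b _ hb => by simp [hb]) (fun h => absurd
    (Finset.mem_range.mpr (by omega)) h)]
  simp

noncomputable def Gaux (j : ℕ) : Polynomial ℤ :=
  ∑ m ∈ Finset.range j, (catalan m : Polynomial ℤ) * hpoly (j - 1 - m)

lemma Gaux_succ (j : ℕ) :
    Gaux (j+1) = ∑ m ∈ Finset.range (j+1), (catalan m : Polynomial ℤ) * hpoly (j - m) := by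
  unfold Gaux
  refine Finset.sum_congr rfl fun m _ => by rw [Nat.succ_sub_one]

lemma Gaux_zero : Gaux 0 = 0 := by simp [Gaux]

lemma hpoly_rec' (j : ℕ) :
    hpoly (j+1) = (Polynomial.X - 1) * hpoly j + Gaux (j+1) := by
  rw [hpoly_rec, Gaux_succ]

theorem stmt12' (n : ℕ) :
    hpoly n = (catalan n : Polynomial ℤ) +
      ∑ m ∈ Finset.range n,
        (Polynomial.X - 1) * (catalan m : Polynomial ℤ) * hpoly (n - 1 - m) := by
  induction n using Nat.strong_induction_on with
  | _ n ih =>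
    match n, ih with
    | 0, _ => simp [hpoly_zero]
    | (k+1), ih =>
      have hIH : ∀ j, j ≤ k → hpoly j = (catalan j : Polynomial ℤ)
          + (Polynomial.X - 1) * Gaux j := by
        intro j hj
        rw [ih j (by omega)]
        congr 1
        rw [Gaux, Finset.mul_sum]
        exact Finset.sum_congr rfl fun m _ => by ring
      have hgoal : (∑ m ∈ Finset.range (k+1), (Polynomial.X - 1)
            * (catalan m : Polynomial ℤ) * hpoly (k + 1 - 1 - m))
          = (Polynomial.X - 1) * Gaux (k+1) := by
        rw [Gaux, Finset.mul_sum]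
        exact Finset.sum_congr rfl fun m _ => by ring
      rw [hgoal]
      set S : Polynomial ℤ :=
        ∑ m ∈ Finset.range k, (catalan m : Polynomial ℤ) * Gaux (k - m) with hS
      have hcat : ((catalan (k+1) : ℕ) : Polynomial ℤ)
          = ∑ m ∈ Finset.range (k+1),
              (catalan m : Polynomial ℤ) * (catalan (k - m) : Polynomial ℤ) := by
        rw [catalan_succ]
        push_cast
        rw [← Fin.sum_univ_eq_sum_range
          (fun m => (catalan m : Polynomial ℤ) * (catalan (k - m) : Polynomial ℤ)) (k+1)]
      have e2 : Gaux (k+1) = (catalan (k+1) : Polynomial ℤ) + (Polynomial.X - 1) * S := by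
        rw [Gaux_succ]
        have step1 : ∀ m ∈ Finset.range (k+1), (catalan m : Polynomial ℤ) * hpoly (k - m)
            = (catalan m : Polynomial ℤ) * (catalan (k-m) : Polynomial ℤ)
              + (Polynomial.X - 1) * ((catalan m : Polynomial ℤ) * Gaux (k - m)) := by
          intro m hm
          rw [hIH (k-m) (by omega)]
          ring
        rw [Finset.sum_congr rfl step1, Finset.sum_add_distrib, ← Finset.mul_sum, ← hcat,
          Finset.sum_range_succ, Nat.sub_self, Gaux_zero, mul_zero, add_zero, ← hS]
      have e3 : Gaux (k+1) = hpoly k + S := by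
        rw [Gaux_succ, Finset.sum_range_succ, Nat.sub_self, hpoly_zero, mul_one]
        have step2 : ∀ m ∈ Finset.range k, (catalan m : Polynomial ℤ) * hpoly (k - m)
            = (Polynomial.X - 1) * ((catalan m : Polynomial ℤ) * hpoly (k - 1 - m))
              + (catalan m : Polynomial ℤ) * Gaux (k - m) := by
          intro m hm
          have hm' := Finset.mem_range.mp hm
          rw [show k - m = (k - 1 - m) + 1 from by omega, hpoly_rec']
          ring
        rw [Finset.sum_congr rfl step2, Finset.sum_add_distrib, ← Finset.mul_sum, ← hS,
          show (∑ m ∈ Finset.range k,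
              (catalan m : Polynomial ℤ) * hpoly (k - 1 - m)) = Gaux k from rfl,
          hIH k le_rfl]
        ring
      calc hpoly (k+1) = (Polynomial.X - 1) * hpoly k + Gaux (k+1) := hpoly_rec' k
        _ = (Polynomial.X - 1) * hpoly k + ((catalan (k+1) : Polynomial ℤ)
              + (Polynomial.X - 1) * S) := by rw [e2]
        _ = (catalan (k+1) : Polynomial ℤ)
              + (Polynomial.X - 1) * (hpoly k + S) := by ring
        _ = (catalan (k+1) : Polynomial ℤ) + (Polynomial.X - 1) * Gaux (k+1) := by
              rw [← e3]

end Aux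

/-- Recurrence `h_n(x) = C_n + Σ_{m=0}^{n-1} (x-1) C_m h_{n-1-m}(x)`. -/
theorem stmt12 (n : ℕ) :
    hpoly n = (catalan n : Polynomial ℤ) +
      ∑ m ∈ Finset.range n,
        (Polynomial.X - 1) * (catalan m : Polynomial ℤ) * hpoly (n - 1 - m) := by
  exact stmt12' n
end

section
/- Krattenthaler's bijection Φ from 132-avoiding permutations of {1,...,n} to Dyck paths of semilength n — obtained by reading π from left to right and adjoining, for each π(j), as many up-steps as needed followed by a down-step from height h_j + 1 to height h_j, where h_j is the number of elements among π(j+1),...,π(n) larger than π(j) — satisfies fp(π) = ct(Φ(π)) and exc(π) = lt(Φ(π)). -/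
/-- `kratHt π j` = number of elements after position `j` that are larger than `π j`. -/
def kratHt {n : ℕ} (π : Equiv.Perm (Fin n)) (j : ℕ) : ℕ :=
  if hj : j < n then
    (Finset.univ.filter (fun k : Fin n => (⟨j, hj⟩ : Fin n) < k ∧ π ⟨j, hj⟩ < π k)).card
  else 0

/-- Krattenthaler's bijection `Φ`: reading `π` from left to right, for each `π j` adjoin
as many up-steps as needed followed by a down-step from height `h_j + 1` to height `h_j`. -/
def phiK {n : ℕ} (π : Equiv.Perm (Fin n)) : List Bool :=
  ((List.range n).map (fun j =>
    List.replicate (kratHt π j + 1 - (if j = 0 then 0 else kratHt π (j - 1))) true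
      ++ [false])).flatten

lemma count_take_eq (w : List Bool) (b : Bool) (k : ℕ) :
    (w.take k).count b = ((Finset.range k).filter (fun i => w.getD i (!b) = b)).card := by
  induction k with
  | zero => simp
  | succ k ih =>
    rw [List.take_succ, Finset.range_add_one, Finset.filter_insert, List.count_append, ih]
    by_cases hk : k < w.length
    · have h1 : w[k]? = some (w.get ⟨k, hk⟩) := by simp [List.getElem?_eq_getElem hk]
      have h2 : w.getD k (!b) = w.get ⟨k, hk⟩ := List.getD_eq_getElem _ _ hk
      rw [h1, h2]
      by_cases hb : w.get ⟨k, hk⟩ = b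
      · rw [if_pos hb, Finset.card_insert_of_notMem (by simp)]
        simp [List.count_singleton]
        simpa using hb
      · rw [if_neg hb]
        simp [List.count_singleton]
        simpa using hb
    · have h1 : w[k]? = none := by simp [List.getElem?_eq_none_iff]; omega
      have h2 : w.getD k (!b) = !b := List.getD_eq_default _ _ (by omega)
      rw [h1, h2, if_neg (by simp)]
      simp

lemma down_closed_eq_range (S : Finset ℕ) (h : ∀ a ∈ S, ∀ b < a, b ∈ S) :
    S = Finset.range S.card := by
  have key : ∀ x, x ∈ S → x < S.card := by
    intro x hx
    have hsub : Finset.range (x+1) ⊆ S := by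
      intro b hb
      simp only [Finset.mem_range] at hb
      rcases Nat.lt_succ_iff_lt_or_eq.mp hb with h' | h'
      · exact h x hx b h'
      · exact h' ▸ hx
    have := Finset.card_le_card hsub
    simpa using this
  have key2 : ∀ x, x < S.card → x ∈ S := by
    intro x hx
    by_contra hxS
    have hsub : S ⊆ Finset.range x := by
      intro y hy
      simp only [Finset.mem_range]
      by_contra hyx
      push_neg at hyx
      rcases Nat.lt_or_ge x y with h' | h'
      · exact hxS (h y hy x h')
      · exact hxS ((Nat.le_antisymm hyx h') ▸ hy)
    have := Finset.card_le_card hsub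
    simp at this
    omega
  ext x
  simp only [Finset.mem_range]
  exact ⟨key x, key2 x⟩

namespace S16

variable {n : ℕ}

def pv (π : Equiv.Perm (Fin n)) (j : ℕ) : ℕ := if hj : j < n then (π ⟨j, hj⟩ : ℕ) else 0

def hgt (π : Equiv.Perm (Fin n)) (j : ℕ) : ℕ :=
  ((Finset.range n).filter (fun k => j < k ∧ pv π j < pv π k)).card

def Lft (π : Equiv.Perm (Fin n)) (j : ℕ) : ℕ :=
  ((Finset.range n).filter (fun k => k < j ∧ pv π j < pv π k)).card

variable (π : Equiv.Perm (Fin n))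

lemma pv_lt (j : ℕ) (hj : j < n) : pv π j < n := by
  simp only [pv, dif_pos hj]
  exact (π ⟨j, hj⟩).isLt

lemma pv_inj {j k : ℕ} (hj : j < n) (hk : k < n) (h : pv π j = pv π k) : j = k := by
  simp only [pv, dif_pos hj, dif_pos hk] at h
  have := π.injective (Fin.val_injective h)
  simpa [Fin.mk.injEq] using this

lemma card_fin_filter (P : Fin n → Prop) [DecidablePred P] :
    (Finset.univ.filter P).card
      = ((Finset.range n).filter (fun k => if hk : k < n then P ⟨k, hk⟩ else False)).card := by
  calc (Finset.univ.filter P).card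
      = ∑ i : Fin n, (fun k : ℕ =>
          if h : k < n then (if P ⟨k, h⟩ then (1:ℕ) else 0) else 0) i.val := by
        rw [Finset.card_filter]
        apply Finset.sum_congr rfl
        intro i _
        simp [i.isLt]
    _ = ∑ k ∈ Finset.range n, (fun k : ℕ =>
          if h : k < n then (if P ⟨k, h⟩ then (1:ℕ) else 0) else 0) k :=
        Fin.sum_univ_eq_sum_range
          (fun k : ℕ => if h : k < n then (if P ⟨k, h⟩ then (1:ℕ) else 0) else 0) n
    _ = _ := by
        rw [Finset.card_filter]
        apply Finset.sum_congr rfl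
        intro k hk
        simp only [Finset.mem_range] at hk
        simp [hk]

lemma hgt_eq_kratHt (j : ℕ) : kratHt π j = hgt π j := by
  unfold kratHt hgt
  by_cases hj : j < n
  · rw [dif_pos hj, card_fin_filter]
    congr 1
    apply Finset.filter_congr
    intro k hk
    simp only [Finset.mem_range] at hk
    rw [dif_pos hk]
    unfold pv
    rw [dif_pos hj, dif_pos hk]
    exact Iff.rfl
  · rw [dif_neg hj]
    symm
    rw [Finset.card_eq_zero, Finset.filter_eq_empty_iff]
    intro k hk
    simp only [Finset.mem_range] at hk
    rintro ⟨h1, _⟩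
    omega

lemma avoid_nat (hπ : Avoids132 π) {i j k : ℕ} (hij : i < j) (hjk : j < k) (hk : k < n)
    (h1 : pv π i < pv π k) (h2 : pv π k < pv π j) : False := by
  have hi : i < n := by omega
  have hj : j < n := by omega
  simp only [pv, dif_pos hi, dif_pos hj, dif_pos hk] at h1 h2
  exact hπ ⟨⟨i, hi⟩, ⟨j, hj⟩, ⟨k, hk⟩, hij, hjk, h1, h2⟩

lemma Lft_le (j : ℕ) (hj : j < n) : Lft π j ≤ j := by
  have : ((Finset.range n).filter (fun k => k < j ∧ pv π j < pv π k)) ⊆ Finset.range j := by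
    intro k hk
    simp only [Finset.mem_filter, Finset.mem_range] at hk ⊢
    omega
  simpa [Lft] using Finset.card_le_card this

lemma lt_Lft_iff (hπ : Avoids132 π) {j l : ℕ} (hj : j < n) (hl : l < j) :
    pv π j < pv π l ↔ l < Lft π j := by
  set S := (Finset.range n).filter (fun k => k < j ∧ pv π j < pv π k) with hS
  have hdc : ∀ a ∈ S, ∀ b < a, b ∈ S := by
    intro a ha b hb
    simp only [hS, Finset.mem_filter, Finset.mem_range] at ha ⊢
    obtain ⟨han, haj, hav⟩ := ha
    refine ⟨by omega, by omega, ?_⟩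
    by_contra hbv
    push_neg at hbv
    have hbv' : pv π b < pv π j :=
      lt_of_le_of_ne hbv (fun h => by have := pv_inj π (by omega) hj h; omega)
    exact avoid_nat π hπ hb haj hj hbv' hav
  have hrange : S = Finset.range (Lft π j) := down_closed_eq_range S hdc
  have hmem : l ∈ S ↔ l < Lft π j := by rw [hrange]; simp
  rw [← hmem, hS]
  simp only [Finset.mem_filter, Finset.mem_range]
  constructor
  · intro h; exact ⟨by omega, hl, h⟩
  · tauto

lemma pv_lt_of_ge_Lft (hπ : Avoids132 π) {j l : ℕ} (hj : j < n) (hl : l < j)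
    (hc : Lft π j ≤ l) : pv π l < pv π j := by
  have h1 : ¬ pv π j < pv π l := by
    rw [lt_Lft_iff π hπ hj hl]; omega
  have h2 : pv π l ≠ pv π j := fun h => by have := pv_inj π (by omega) hj h; omega
  omega

lemma hgt_gt_of_between (hπ : Avoids132 π) {j l : ℕ} (hj : j < n)
    (hcl : Lft π j ≤ l) (hlj : l < j) : hgt π j < hgt π l := by
  have hl : l < n := by omega
  have hvl : pv π l < pv π j := pv_lt_of_ge_Lft π hπ hj hlj hcl
  have hsub : insert j ((Finset.range n).filter (fun k => j < k ∧ pv π j < pv π k))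
      ⊆ (Finset.range n).filter (fun k => l < k ∧ pv π l < pv π k) := by
    intro k hk
    rcases Finset.mem_insert.mp hk with rfl | hk
    · simp only [Finset.mem_filter, Finset.mem_range]
      exact ⟨hj, hlj, hvl⟩
    · simp only [Finset.mem_filter, Finset.mem_range] at hk ⊢
      exact ⟨hk.1, by omega, by omega⟩
  have h1 := Finset.card_le_card hsub
  rw [Finset.card_insert_of_notMem (by simp)] at h1
  simpa [hgt] using h1

lemma hgt_le_prev (hπ : Avoids132 π) {j : ℕ} (hj : j < n) (hL : 0 < Lft π j) :
    hgt π (Lft π j - 1) ≤ hgt π j := by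
  set l := Lft π j - 1 with hldef
  have hlj : l < j := by have := Lft_le π j hj; omega
  have hl : l < n := by omega
  have hvl : pv π j < pv π l := (lt_Lft_iff π hπ hj hlj).mpr (by omega)
  have hsub : (Finset.range n).filter (fun k => l < k ∧ pv π l < pv π k)
      ⊆ (Finset.range n).filter (fun k => j < k ∧ pv π j < pv π k) := by
    intro k hk
    simp only [Finset.mem_filter, Finset.mem_range] at hk ⊢
    obtain ⟨hkn, hlk, hvk⟩ := hk
    have hkj : j < k := by
      rcases Nat.lt_trichotomy k j with h | h | h
      · exfalso
        have := pv_lt_of_ge_Lft π hπ hj h (by omega)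
        omega
      · exfalso; subst h; omega
      · exact h
    exact ⟨hkn, hkj, by omega⟩
  simpa [hgt] using Finset.card_le_card hsub

lemma hgt_prev_le (hπ : Avoids132 π) {j : ℕ} (h0 : 0 < j) (hj : j < n) :
    hgt π (j-1) ≤ hgt π j + 1 := by
  set l := j - 1 with hldef
  have hl : l < n := by omega
  by_cases hv : pv π j < pv π l
  · have hsub : (Finset.range n).filter (fun k => l < k ∧ pv π l < pv π k)
        ⊆ (Finset.range n).filter (fun k => j < k ∧ pv π j < pv π k) := by
      intro k hk
      simp only [Finset.mem_filter, Finset.mem_range] at hk ⊢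
      obtain ⟨hkn, hlk, hvk⟩ := hk
      have : k ≠ j := fun h => by subst h; omega
      exact ⟨hkn, by omega, by omega⟩
    have := Finset.card_le_card hsub
    simp only [hgt] at *
    omega
  · have hvl : pv π l < pv π j := by
      have h2 : pv π l ≠ pv π j := fun h => by have := pv_inj π hl hj h; omega
      omega
    have hsub : (Finset.range n).filter (fun k => l < k ∧ pv π l < pv π k)
        ⊆ insert j ((Finset.range n).filter (fun k => j < k ∧ pv π j < pv π k)) := by
      intro k hk
      simp only [Finset.mem_filter, Finset.mem_range] at hk
      obtain ⟨hkn, hlk, hvk⟩ := hk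
      rcases Nat.eq_or_lt_of_le (by omega : j ≤ k) with h | h
      · exact h ▸ Finset.mem_insert_self j _
      · apply Finset.mem_insert_of_mem
        simp only [Finset.mem_filter, Finset.mem_range]
        refine ⟨hkn, h, ?_⟩
        by_contra hk2
        push_neg at hk2
        have hne : pv π k ≠ pv π j := fun he => by have := pv_inj π hkn hj he; omega
        exact avoid_nat π hπ (by omega : l < j) h hkn hvk (by omega)
    have h1 := Finset.card_le_card hsub
    have h2 := Finset.card_insert_le j ((Finset.range n).filter (fun k => j < k ∧ pv π j < pv π k))
    simp only [hgt] at *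
    omega

lemma hgt_add_lt (j : ℕ) (hj : j < n) : hgt π j + j < n := by
  have hsub : (Finset.range n).filter (fun k => j < k ∧ pv π j < pv π k)
      ⊆ Finset.Ico (j+1) n := by
    intro k hk
    simp only [Finset.mem_filter, Finset.mem_range] at hk
    simp only [Finset.mem_Ico]
    omega
  have := Finset.card_le_card hsub
  rw [Nat.card_Ico] at this
  simp only [hgt]
  omega

lemma hgt_add_Lft (j : ℕ) (hj : j < n) : hgt π j + Lft π j + pv π j + 1 = n := by
  have hcard : ((Finset.range n).filter (fun k => pv π j < pv π k)).card
      = n - 1 - pv π j := by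
    have : ((Finset.range n).filter (fun k => pv π j < pv π k)).card
        = (Finset.Ioo (pv π j) n).card := by
      apply Finset.card_bij (fun k _ => pv π k)
      · intro k hk
        simp only [Finset.mem_filter, Finset.mem_range] at hk
        simp only [Finset.mem_Ioo]
        exact ⟨hk.2, pv_lt π k hk.1⟩
      · intro a ha b hb hab
        simp only [Finset.mem_filter, Finset.mem_range] at ha hb
        exact pv_inj π ha.1 hb.1 hab
      · intro v hv
        simp only [Finset.mem_Ioo] at hv
        refine ⟨(π.symm ⟨v, hv.2⟩ : ℕ), ?_, ?_⟩
        · simp only [Finset.mem_filter, Finset.mem_range]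
          have hlt : ((π.symm ⟨v, hv.2⟩ : Fin n) : ℕ) < n := (π.symm ⟨v, hv.2⟩).isLt
          constructor
          · exact hlt
          · have : pv π ((π.symm ⟨v, hv.2⟩ : Fin n) : ℕ) = v := by
              simp only [pv, dif_pos hlt, Fin.eta]
              simp
            omega
        · have hlt : ((π.symm ⟨v, hv.2⟩ : Fin n) : ℕ) < n := (π.symm ⟨v, hv.2⟩).isLt
          simp only [pv, dif_pos hlt, Fin.eta]
          simp
    rw [this, Nat.card_Ioo]
    omega
  have hsplit : (Finset.range n).filter (fun k => pv π j < pv π k)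
      = ((Finset.range n).filter (fun k => j < k ∧ pv π j < pv π k))
        ∪ ((Finset.range n).filter (fun k => k < j ∧ pv π j < pv π k)) := by
    rw [← Finset.filter_or]
    apply Finset.filter_congr
    intro k hk
    simp only [Finset.mem_range] at hk
    constructor
    · intro h
      have : k ≠ j := fun he => by subst he; omega
      rcases Nat.lt_or_ge j k with h' | h'
      · exact Or.inl ⟨h', h⟩
      · exact Or.inr ⟨by omega, h⟩
    · rintro (⟨_, h⟩ | ⟨_, h⟩) <;> exact h
  have hdisj : Disjoint ((Finset.range n).filter (fun k => j < k ∧ pv π j < pv π k))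
      ((Finset.range n).filter (fun k => k < j ∧ pv π j < pv π k)) := by
    apply Finset.disjoint_filter_filter'
    rw [disjoint_iff_inf_le]
    intro k hk
    simp only [Pi.inf_apply, inf_Prop_eq] at hk
    omega
  have := Finset.card_union_of_disjoint hdisj
  rw [← hsplit, hcard] at this
  have hp := pv_lt π j hj
  simp only [hgt, Lft]
  omega

def dpos (π : Equiv.Perm (Fin n)) (j : ℕ) : ℕ := hgt π j + 2*j + 1

def upos (π : Equiv.Perm (Fin n)) (j : ℕ) : ℕ := hgt π j + 2 * Lft π j

def hp (π : Equiv.Perm (Fin n)) (j : ℕ) : ℕ := if j = 0 then 0 else hgt π (j-1)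

def blk (π : Equiv.Perm (Fin n)) (j : ℕ) : List Bool :=
  List.replicate (hgt π j + 1 - hp π j) true ++ [false]

def pre (π : Equiv.Perm (Fin n)) (j : ℕ) : List Bool := ((List.range j).map (blk π)).flatten

lemma phiK_eq : phiK π = pre π n := by
  unfold phiK pre blk hp
  congr 1
  apply List.map_congr_left
  intro j _
  rw [hgt_eq_kratHt]
  by_cases hj : j = 0
  · simp [hj]
  · simp only [if_neg hj]
    rw [hgt_eq_kratHt]

lemma hp_le (hπ : Avoids132 π) {j : ℕ} (hj : j < n) : hp π j ≤ hgt π j + 1 := by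
  unfold hp
  by_cases h0 : j = 0
  · simp [h0]
  · rw [if_neg h0]
    exact hgt_prev_le π hπ (by omega) hj

lemma len_pre (hπ : Avoids132 π) : ∀ j, j ≤ n → (pre π j).length = hp π j + 2*j := by
  intro j
  induction j with
  | zero => intro _; simp [pre, hp]
  | succ j ih =>
    intro hj1
    have hjn : j < n := hj1
    have hsucc : pre π (j+1) = pre π j ++ blk π j := by
      unfold pre
      rw [List.range_succ]
      simp
    have hF4 : hp π j ≤ hgt π j + 1 := hp_le π hπ hjn
    rw [hsucc, List.length_append, ih (by omega)]
    have hlb : (blk π j).length = (hgt π j + 1 - hp π j) + 1 := by simp [blk]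
    rw [hlb]
    have : hp π (j+1) = hgt π j := by simp [hp]
    rw [this]
    omega

lemma dpos_mono (hπ : Avoids132 π) : ∀ {i j : ℕ}, i < j → j < n → dpos π i < dpos π j := by
  intro i j
  induction j with
  | zero => omega
  | succ j ih =>
    intro hij hj
    have hstep : dpos π j < dpos π (j+1) := by
      have := hgt_prev_le π hπ (by omega : 0 < j+1) hj
      simp only [Nat.add_sub_cancel] at this
      unfold dpos
      omega
    rcases Nat.lt_or_ge i j with h | h
    · exact lt_trans (ih h (by omega)) hstep
    · have : i = j := by omega
      subst this
      exact hstep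

lemma dpos_lt_2n {j : ℕ} (hj : j < n) : dpos π j < 2*n := by
  have := hgt_add_lt π j hj
  unfold dpos
  omega

lemma dpos_lt_len (hπ : Avoids132 π) {l j : ℕ} (hl : l < j) (hj : j ≤ n) :
    dpos π l < (pre π j).length := by
  have h1 : 1 ≤ j := by omega
  have hjn : j - 1 < n := by omega
  have h2 : dpos π l ≤ dpos π (j-1) := by
    rcases Nat.lt_or_ge l (j-1) with h | h
    · exact le_of_lt (dpos_mono π hπ h hjn)
    · have : l = j - 1 := by omega
      rw [this]
  rw [len_pre π hπ j hj]
  have h3 : hp π j = hgt π (j-1) := by unfold hp; rw [if_neg (by omega)]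
  unfold dpos at h2 ⊢
  omega

lemma getD_pre (hπ : Avoids132 π) : ∀ j, j ≤ n → ∀ i, i < (pre π j).length →
    ((pre π j).getD i true = false ↔ ∃ l, l < j ∧ i = dpos π l) := by
  intro j
  induction j with
  | zero => intro _ i hi; simp [pre] at hi
  | succ j ih =>
    intro hj1 i hi
    have hjn : j < n := hj1
    have hple : (pre π j).length = hp π j + 2*j := len_pre π hπ j (le_of_lt hjn)
    have hsucc : pre π (j+1) = pre π j ++ blk π j := by
      unfold pre
      rw [List.range_succ]
      simp
    have hF4 : hp π j ≤ hgt π j + 1 := hp_le π hπ hjn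
    have hlb : (blk π j).length = (hgt π j + 1 - hp π j) + 1 := by simp [blk]
    rw [hsucc] at hi ⊢
    rw [List.length_append] at hi
    by_cases hcase : i < (pre π j).length
    · rw [List.getD_append _ _ _ _ hcase]
      rw [ih (le_of_lt hjn) i hcase]
      constructor
      · rintro ⟨l, hl, rfl⟩
        exact ⟨l, by omega, rfl⟩
      · rintro ⟨l, hl, rfl⟩
        refine ⟨l, ?_, rfl⟩
        by_contra hlj
        have hlj' : l = j := by omega
        subst hlj'
        unfold dpos at hcase
        omega
    · push_neg at hcase
      rw [List.getD_append_right _ _ _ _ hcase]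
      have hi' : i - (pre π j).length < (hgt π j + 1 - hp π j) + 1 := by omega
      by_cases hit : i - (pre π j).length < hgt π j + 1 - hp π j
      · have hgd : (blk π j).getD (i - (pre π j).length) true = true := by
          unfold blk
          rw [List.getD_append _ _ _ _ (by simpa using hit)]
          rw [List.getD_eq_getElem _ _ (by simpa using hit)]
          simp
        rw [hgd]
        constructor
        · intro h
          exact absurd h (by simp)
        · rintro ⟨l, hl, rfl⟩
          exfalso
          rcases Nat.lt_or_ge l j with h | h
          · have := dpos_lt_len π hπ h (le_of_lt hjn)
            omega
          · have hlj' : l = j := by omega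
            subst hlj'
            unfold dpos at hcase hit
            omega
      · have hteq : i - (pre π j).length = hgt π j + 1 - hp π j := by omega
        have hgd : (blk π j).getD (i - (pre π j).length) true = false := by
          unfold blk
          rw [hteq, List.getD_append_right _ _ _ _ (by simp)]
          simp
        rw [hgd]
        constructor
        · intro _
          refine ⟨j, by omega, ?_⟩
          unfold dpos
          omega
        · intro _
          rfl

lemma hgt_last (h0 : 0 < n) : hgt π (n-1) = 0 := by
  have := hgt_add_lt π (n-1) (by omega)
  omega

lemma len_w (hπ : Avoids132 π) : (phiK π).length = 2*n := by
  rw [phiK_eq, len_pre π hπ n le_rfl]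
  unfold hp
  by_cases h0 : n = 0
  · simp [h0]
  · rw [if_neg h0, hgt_last π (by omega)]
    omega

lemma getD_w_false (hπ : Avoids132 π) {i : ℕ} (hi : i < 2*n) :
    ((phiK π).getD i true = false) ↔ ∃ l, l < n ∧ i = dpos π l := by
  rw [phiK_eq]
  apply getD_pre π hπ n le_rfl i
  rw [← phiK_eq, len_w π hπ]
  exact hi

lemma getD_w_true (hπ : Avoids132 π) {i : ℕ} (hi : i < 2*n) :
    ((phiK π).getD i false = true) ↔ ¬ ∃ l, l < n ∧ i = dpos π l := by
  have hlen : i < (phiK π).length := by rw [len_w π hπ]; exact hi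
  have h1 : (phiK π).getD i false = (phiK π).getD i true := by
    rw [List.getD_eq_getElem _ _ hlen, List.getD_eq_getElem _ _ hlen]
  rw [h1, ← getD_w_false π hπ hi]
  cases h : (phiK π).getD i true <;> simp [h]

def Dn (π : Equiv.Perm (Fin n)) (k : ℕ) : ℕ :=
  ((Finset.range n).filter (fun l => dpos π l < k)).card

lemma Dn_iff (hπ : Avoids132 π) (k : ℕ) : ∀ l, l < n → (dpos π l < k ↔ l < Dn π k) := by
  intro l hl
  set S := (Finset.range n).filter (fun l => dpos π l < k) with hS
  have hdc : ∀ a ∈ S, ∀ b < a, b ∈ S := by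
    intro a ha b hb
    simp only [hS, Finset.mem_filter, Finset.mem_range] at ha ⊢
    exact ⟨by omega, lt_trans (dpos_mono π hπ hb ha.1) ha.2⟩
  have hrange : S = Finset.range (Dn π k) := down_closed_eq_range S hdc
  have hmem : l ∈ S ↔ l < Dn π k := by rw [hrange]; simp
  rw [← hmem, hS]
  simp only [Finset.mem_filter, Finset.mem_range]
  tauto

lemma Dn_le_n (k : ℕ) : Dn π k ≤ n := by
  unfold Dn
  calc ((Finset.range n).filter _).card ≤ (Finset.range n).card :=
        Finset.card_le_card (Finset.filter_subset _ _)
    _ = n := Finset.card_range n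

lemma Dn_mono {k k' : ℕ} (h : k ≤ k') : Dn π k ≤ Dn π k' := by
  apply Finset.card_le_card
  intro l hl
  simp only [Finset.mem_filter, Finset.mem_range] at hl ⊢
  omega

lemma Dn_double_le (hπ : Avoids132 π) (k : ℕ) : 2 * Dn π k ≤ k := by
  by_cases h0 : Dn π k = 0
  · omega
  · have ht : Dn π k - 1 < n := by have := Dn_le_n π k; omega
    have := (Dn_iff π hπ k _ ht).mpr (by omega)
    unfold dpos at this
    omega

lemma Dn_eq_of (hπ : Avoids132 π) {k t : ℕ} (ht : t ≤ n)
    (h : ∀ l, l < n → (dpos π l < k ↔ l < t)) : Dn π k = t := by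
  unfold Dn
  have : (Finset.range n).filter (fun l => dpos π l < k) = Finset.range t := by
    ext l
    simp only [Finset.mem_filter, Finset.mem_range]
    constructor
    · rintro ⟨hln, hd⟩
      exact (h l hln).mp hd
    · intro hlt
      exact ⟨by omega, (h l (by omega)).mpr hlt⟩
  rw [this, Finset.card_range]

lemma Dn_2n (hπ : Avoids132 π) : Dn π (2*n) = n :=
  Dn_eq_of π hπ le_rfl (fun l hl => ⟨fun _ => hl, fun _ => dpos_lt_2n π hl⟩)

lemma Dn_dpos (hπ : Avoids132 π) {j : ℕ} (hj : j < n) : Dn π (dpos π j) = j := by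
  apply Dn_eq_of π hπ (by omega)
  intro l hl
  constructor
  · intro h
    by_contra hlj
    push_neg at hlj
    rcases Nat.eq_or_lt_of_le hlj with h' | h'
    · subst h'; omega
    · have := dpos_mono π hπ h' hl
      omega
  · intro h
    exact dpos_mono π hπ h hj

lemma Dn_dpos_succ (hπ : Avoids132 π) {j : ℕ} (hj : j < n) : Dn π (dpos π j + 1) = j + 1 := by
  apply Dn_eq_of π hπ (by omega)
  intro l hl
  constructor
  · intro h
    by_contra hlj
    push_neg at hlj
    have := dpos_mono π hπ (by omega : j < l) hl
    omega
  · intro h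
    rcases Nat.lt_or_ge l j with h' | h'
    · have := dpos_mono π hπ h' hj
      omega
    · have : l = j := by omega
      subst this
      omega

lemma dpos_vs_upos (hπ : Avoids132 π) {j l : ℕ} (hj : j < n) (hl : l < n) :
    (l < Lft π j → dpos π l < upos π j) ∧ (Lft π j ≤ l → upos π j < dpos π l) := by
  have hcj : Lft π j ≤ j := Lft_le π j hj
  constructor
  · intro hlc
    have hc0 : 0 < Lft π j := by omega
    have h1 : dpos π l ≤ dpos π (Lft π j - 1) := by
      rcases Nat.lt_or_ge l (Lft π j - 1) with h | h
      · exact le_of_lt (dpos_mono π hπ h (by omega))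
      · have : l = Lft π j - 1 := by omega
        rw [this]
    have h2 := hgt_le_prev π hπ hj hc0
    unfold dpos at h1 ⊢
    unfold upos
    omega
  · intro hcl
    rcases Nat.lt_trichotomy l j with h | h | h
    · have := hgt_gt_of_between π hπ hj hcl h
      unfold dpos upos
      omega
    · subst h
      unfold dpos upos
      omega
    · have h1 : dpos π j < dpos π l := dpos_mono π hπ h hl
      unfold dpos at h1 ⊢
      unfold upos
      omega

lemma upos_lt_dpos {j : ℕ} (hj : j < n) : upos π j < dpos π j := by
  have := Lft_le π j hj
  unfold upos dpos
  omega

lemma Dn_upos (hπ : Avoids132 π) {j : ℕ} (hj : j < n) : Dn π (upos π j + 1) = Lft π j := by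
  apply Dn_eq_of π hπ (by have := Lft_le π j hj; omega)
  intro l hl
  have h := dpos_vs_upos π hπ hj hl
  constructor
  · intro hd
    by_contra hlc
    push_neg at hlc
    have := h.2 hlc
    omega
  · intro hlc
    have := h.1 hlc
    omega

lemma count_bool_len (w : List Bool) : w.count true + w.count false = w.length := by
  induction w with
  | nil => simp
  | cons a l ih =>
    cases a <;> simp [List.count_cons] <;> omega

lemma countF_take (hπ : Avoids132 π) (k : ℕ) :
    ((phiK π).take k).count false = Dn π k := by
  rw [count_take_eq]
  symm
  apply Finset.card_bij (fun l _ => dpos π l)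
  · intro l hl
    simp only [Finset.mem_filter, Finset.mem_range] at hl ⊢
    refine ⟨hl.2, ?_⟩
    show (phiK π).getD (dpos π l) (!false) = false
    rw [show (!false) = true from rfl]
    exact (getD_w_false π hπ (dpos_lt_2n π hl.1)).mpr ⟨l, hl.1, rfl⟩
  · intro a ha b hb hab
    simp only [Finset.mem_filter, Finset.mem_range] at ha hb
    rcases Nat.lt_trichotomy a b with h | h | h
    · have := dpos_mono π hπ h hb.1; omega
    · exact h
    · have := dpos_mono π hπ h ha.1; omega
  · intro i hi
    simp only [Finset.mem_filter, Finset.mem_range] at hi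
    obtain ⟨hik, hgd⟩ := hi
    rw [show (!false) = true from rfl] at hgd
    have hi2n : i < 2*n := by
      by_contra h
      push_neg at h
      rw [List.getD_eq_default _ _ (by rw [len_w π hπ]; omega)] at hgd
      exact absurd hgd (by simp)
    obtain ⟨l, hl, rfl⟩ := (getD_w_false π hπ hi2n).mp hgd
    exact ⟨l, by simp only [Finset.mem_filter, Finset.mem_range]; exact ⟨hl, hik⟩, rfl⟩

lemma countT_take (hπ : Avoids132 π) (k : ℕ) :
    ((phiK π).take k).count true = min k (2*n) - Dn π k := by
  have h1 := count_bool_len ((phiK π).take k)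
  rw [countF_take π hπ] at h1
  rw [List.length_take, len_w π hπ] at h1
  omega

lemma count_seg (w : List Bool) (a m : ℕ) (bo : Bool) :
    ((w.drop a).take m).count bo + (w.take a).count bo = (w.take (a + m)).count bo := by
  rw [List.take_add, List.count_append]
  omega

lemma seg_take_count (w : List Bool) {a m k : ℕ} (hk : k ≤ m) (bo : Bool) :
    (((w.drop a).take m).take k).count bo + (w.take a).count bo = (w.take (a+k)).count bo := by
  rw [List.take_take, min_eq_left hk]
  exact count_seg w a k bo

lemma tunnel_mem (hπ : Avoids132 π) {j : ℕ} (hj : j < n) :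
    (upos π j, dpos π j) ∈ tunnels (phiK π) := by
  have hud := upos_lt_dpos π hj
  have hd2n := dpos_lt_2n π hj
  have hLj := Lft_le π j hj
  have hu : upos π j = hgt π j + 2 * Lft π j := rfl
  have hd : dpos π j = hgt π j + 2*j + 1 := rfl
  simp only [tunnels, Finset.mem_filter, Finset.mem_product, Finset.mem_range]
  refine ⟨⟨?_, ?_⟩, ?_, ?_, ?_, ?_⟩
  · rw [len_w π hπ]; omega
  · rw [len_w π hπ]; omega
  · exact hud
  · rw [getD_w_true π hπ (by omega)]
    rintro ⟨l, hl, he⟩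
    have h := dpos_vs_upos π hπ hj hl
    rcases Nat.lt_or_ge l (Lft π j) with h' | h'
    · have := h.1 h'; omega
    · have := h.2 h'; omega
  · rw [getD_w_false π hπ hd2n]
    exact ⟨j, hj, rfl⟩
  · constructor
    · have hF := count_seg (phiK π) (upos π j + 1) (dpos π j - upos π j - 1) false
      have hT := count_seg (phiK π) (upos π j + 1) (dpos π j - upos π j - 1) true
      rw [show upos π j + 1 + (dpos π j - upos π j - 1) = dpos π j by omega] at hF hT
      rw [countF_take π hπ, countF_take π hπ, Dn_dpos π hπ hj, Dn_upos π hπ hj] at hF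
      rw [countT_take π hπ, countT_take π hπ, Dn_dpos π hπ hj, Dn_upos π hπ hj,
          min_eq_left (by omega), min_eq_left (by omega)] at hT
      omega
    · intro k hk
      rw [List.length_take, List.length_drop, len_w π hπ] at hk
      have hk' : k ≤ dpos π j - upos π j - 1 := by omega
      have hkey : 2 * Dn π (upos π j + 1 + k) ≤ k + 2 * Lft π j := by
        rcases Nat.lt_or_ge (Lft π j) (Dn π (upos π j + 1 + k)) with hgt' | hle
        · have htn : Dn π (upos π j + 1 + k) - 1 < n := by
            have := Dn_le_n π (upos π j + 1 + k); omega
          have hdd : dpos π (Dn π (upos π j + 1 + k) - 1) < upos π j + 1 + k :=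
            (Dn_iff π hπ _ _ htn).mpr (by omega)
          have hlt : Dn π (upos π j + 1 + k) - 1 < j := by
            have h2 : dpos π (Dn π (upos π j + 1 + k) - 1) < dpos π j := by omega
            by_contra hcon
            push_neg at hcon
            rcases Nat.eq_or_lt_of_le hcon with h' | h'
            · rw [← h'] at h2; omega
            · have := dpos_mono π hπ h' htn; omega
          have hgl := hgt_gt_of_between π hπ hj (by omega) hlt
          have hde : dpos π (Dn π (upos π j + 1 + k) - 1)
              = hgt π (Dn π (upos π j + 1 + k) - 1) + 2*(Dn π (upos π j + 1 + k) - 1) + 1 := rfl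
          omega
        · omega
      have hF := seg_take_count (phiK π) (a := upos π j + 1) hk' false
      have hT := seg_take_count (phiK π) (a := upos π j + 1) hk' true
      rw [countF_take π hπ, countF_take π hπ, Dn_upos π hπ hj] at hF
      rw [countT_take π hπ, countT_take π hπ, Dn_upos π hπ hj,
          min_eq_left (by omega), min_eq_left (by omega)] at hT
      omega

lemma tunnel_sub (hπ : Avoids132 π) {p : ℕ × ℕ} (hp : p ∈ tunnels (phiK π)) :
    ∃ j, j < n ∧ p = (upos π j, dpos π j) := by
  obtain ⟨i, q⟩ := p
  simp only [tunnels, Finset.mem_filter, Finset.mem_product, Finset.mem_range] at hp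
  obtain ⟨⟨hiL, hqL⟩, hiq, hgdi, hgdq, hdy⟩ := hp
  rw [len_w π hπ] at hiL hqL
  obtain ⟨j, hj, rfl⟩ := (getD_w_false π hπ hqL).mp hgdq
  refine ⟨j, hj, ?_⟩
  have hup : ¬ ∃ l, l < n ∧ i = dpos π l := (getD_w_true π hπ hiL).mp hgdi
  have hdj : dpos π j = hgt π j + 2*j + 1 := rfl
  have hsegF := count_seg (phiK π) (i+1) (dpos π j - i - 1) false
  have hsegT := count_seg (phiK π) (i+1) (dpos π j - i - 1) true
  rw [show i + 1 + (dpos π j - i - 1) = dpos π j by omega] at hsegF hsegT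
  rw [countF_take π hπ, countF_take π hπ, Dn_dpos π hπ hj] at hsegF
  rw [countT_take π hπ, countT_take π hπ, Dn_dpos π hπ hj,
      min_eq_left (by omega), min_eq_left (by omega)] at hsegT
  have hbal := hdy.1
  have haj : Dn π (i+1) ≤ j := by
    rw [← Dn_dpos π hπ hj]
    exact Dn_mono π (by omega)
  have ha2 := Dn_double_le π hπ (i+1)
  have hieq : i = hgt π j + 2 * Dn π (i+1) := by omega
  have hsub : ∀ l, Dn π (i+1) ≤ l → l < j → hgt π j < hgt π l := by
    intro l hal hlj
    have hln : l < n := by omega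
    have hd1 : i + 1 ≤ dpos π l := by
      by_contra hcon
      push_neg at hcon
      have := (Dn_iff π hπ (i+1) l hln).mp (by omega)
      omega
    have hd1' : i ≠ dpos π l := fun h => hup ⟨l, hln, h⟩
    have hd2 : dpos π l < dpos π j := dpos_mono π hπ hlj hj
    have hklen : dpos π l - i ≤ dpos π j - i - 1 := by omega
    have hPk : ((((phiK π).drop (i+1)).take (dpos π j - i - 1)).take (dpos π l - i)).count false
        ≤ ((((phiK π).drop (i+1)).take (dpos π j - i - 1)).take (dpos π l - i)).count true := by
      rcases Nat.eq_or_lt_of_le hklen with h' | h'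
      · have hlenseg : (((phiK π).drop (i+1)).take (dpos π j - i - 1)).length
            = dpos π j - i - 1 := by
          rw [List.length_take, List.length_drop, len_w π hπ]; omega
        rw [h', List.take_of_length_le (le_of_eq hlenseg)]
        exact le_of_eq hbal.symm
      · exact hdy.2 _ (by rw [List.length_take, List.length_drop, len_w π hπ]; omega)
    have hF := seg_take_count (phiK π) (a := i+1) hklen false
    have hT := seg_take_count (phiK π) (a := i+1) hklen true
    rw [show i + 1 + (dpos π l - i) = dpos π l + 1 by omega] at hF hT
    rw [countF_take π hπ, countF_take π hπ, Dn_dpos_succ π hπ hln] at hF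
    rw [countT_take π hπ, countT_take π hπ, Dn_dpos_succ π hπ hln,
        min_eq_left (by omega), min_eq_left (by omega)] at hT
    have hdl : dpos π l = hgt π l + 2*l + 1 := rfl
    omega
  have hLle := Lft_le π j hj
  have hage : Lft π j ≤ Dn π (i+1) := by
    by_contra hcon
    push_neg at hcon
    have hc0 : 0 < Lft π j := by omega
    have h1 := hsub (Lft π j - 1) (by omega) (by omega)
    have h2 := hgt_le_prev π hπ hj hc0
    omega
  have hale : Dn π (i+1) ≤ Lft π j := by
    by_contra hcon
    push_neg at hcon
    have h1 : Dn π (i+1) - 1 < j := by omega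
    have h2 := hgt_gt_of_between π hπ hj (by omega : Lft π j ≤ Dn π (i+1) - 1) h1
    have h3 : dpos π (Dn π (i+1) - 1) < i + 1 :=
      (Dn_iff π hπ (i+1) (Dn π (i+1) - 1) (by omega)).mpr (by omega)
    have h4 : i ≠ dpos π (Dn π (i+1) - 1) := fun h => hup ⟨Dn π (i+1) - 1, by omega, h⟩
    have h5 : dpos π (Dn π (i+1) - 1) = hgt π (Dn π (i+1) - 1) + 2*(Dn π (i+1) - 1) + 1 := rfl
    omega
  have heq : i = upos π j := by
    have : Dn π (i+1) = Lft π j := by omega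
    rw [hieq, this]
    rfl
  rw [heq]

lemma tunnels_eq (hπ : Avoids132 π) :
    tunnels (phiK π) = (Finset.range n).image (fun j => (upos π j, dpos π j)) := by
  ext p
  simp only [Finset.mem_image, Finset.mem_range]
  constructor
  · intro hp
    obtain ⟨j, hj, he⟩ := tunnel_sub π hπ hp
    exact ⟨j, hj, he.symm⟩
  · rintro ⟨j, hj, rfl⟩
    exact tunnel_mem π hπ hj

lemma card_tunnel_filter (hπ : Avoids132 π) (P : ℕ × ℕ → Prop) [DecidablePred P] :
    ((tunnels (phiK π)).filter P).card
      = ((Finset.range n).filter (fun j => P (upos π j, dpos π j))).card := by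
  rw [tunnels_eq π hπ, Finset.filter_image]
  apply Finset.card_image_of_injOn
  intro a ha b hb hab
  simp only [Finset.coe_filter, Set.mem_setOf_eq, Finset.mem_range] at ha hb
  have h2 : dpos π a = dpos π b := congrArg Prod.snd hab
  rcases Nat.lt_trichotomy a b with h | h | h
  · have := dpos_mono π hπ h hb.1; omega
  · exact h
  · have := dpos_mono π hπ h ha.1; omega

lemma fp_eq : fpCount π = ((Finset.range n).filter (fun j => pv π j = j)).card := by
  unfold fpCount
  rw [Nat.card_eq_fintype_card, Fintype.card_subtype, card_fin_filter]
  congr 1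
  apply Finset.filter_congr
  intro k hk
  simp only [Finset.mem_range] at hk
  rw [dif_pos hk]
  unfold pv
  rw [dif_pos hk]
  simp [Fin.ext_iff]

lemma exc_eq : excCount π = ((Finset.range n).filter (fun j => j < pv π j)).card := by
  unfold excCount
  rw [Nat.card_eq_fintype_card, Fintype.card_subtype, card_fin_filter]
  congr 1
  apply Finset.filter_congr
  intro k hk
  simp only [Finset.mem_range] at hk
  rw [dif_pos hk]
  unfold pv
  rw [dif_pos hk]
  simp [Fin.lt_def]

end S16
/-- `Φ` sends fixed points to centered tunnels and excedances to left tunnels. -/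
theorem stmt16 (n : ℕ) (π : Equiv.Perm (Fin n)) (hπ : Avoids132 π) :
    ctCount (phiK π) = fpCount π ∧ ltCount (phiK π) = excCount π := by
  have hlen := S16.len_w π hπ
  constructor
  · show ctr 0 (phiK π) = fpCount π
    unfold ctr
    rw [S16.card_tunnel_filter π hπ, S16.fp_eq π]
    congr 1
    apply Finset.filter_congr
    intro j hj
    simp only [Finset.mem_range] at hj
    have hkey := S16.hgt_add_Lft π j hj
    have hu : S16.upos π j = S16.hgt π j + 2 * S16.Lft π j := rfl
    have hd : S16.dpos π j = S16.hgt π j + 2*j + 1 := rfl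
    rw [hlen]
    dsimp only
    push_cast
    omega
  · show ltr 0 (phiK π) = excCount π
    unfold ltr
    rw [S16.card_tunnel_filter π hπ, S16.exc_eq π]
    congr 1
    apply Finset.filter_congr
    intro j hj
    simp only [Finset.mem_range] at hj
    have hkey := S16.hgt_add_Lft π j hj
    have hu : S16.upos π j = S16.hgt π j + 2 * S16.Lft π j := rfl
    have hd : S16.dpos π j = S16.hgt π j + 2*j + 1 := rfl
    rw [hlen]
    dsimp only
    push_cast
    omega
end
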